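/- arXiv:math/0605454 — 8 statements merged into one kernel-verified Lean document; each statement's English description precedes it below -/
import Mathlib

section
/- In Euclidean space ℝ^d, for three points x, y, z satisfying dist(x,y) ≤ dist(y,z) ≤ dist(x,z) ≤ A·dist(x,y) with A > 1, one has β²·diam{x,y,z} ∼ δ({x,y,z}) with comparability constants depending only on A, where β is the normalized distance of the middle point from the line through the two extreme points: β = dist(y, line(x,z))/diam{x,y,z} and δ({x,y,z}) = dist(x,y)+dist(y,z)-dist(x,z). -/
/-!
Heron's formula for the height: with `a, b, c = dist x y, dist y z, dist x z` and `h` the distance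
from `y` to the line `xz`, one has `4 c² h² = (a + b + c)(a + c - b)(b + c - a) · δ`. When
`a ≤ b ≤ c` the cofactor of `δ` lies between `a c²` and `6 c³`, and `c ≤ A a` makes both bounds
comparable to `c³`; since `β² · diam = h² / c`, this gives `β² · diam ∼ δ`.
-/

open Metric EuclideanGeometry
open scoped RealInnerProductSpace

section

variable {V P : Type*} [NormedAddCommGroup V] [InnerProductSpace ℝ V] [MetricSpace P]
  [NormedAddTorsor V P]

theorem dist_sq_mul_infDist_affineSpan_pair_sq (x y z : P) :
    dist x z ^ 2 * infDist y (line[ℝ, x, z] : Set P) ^ 2 =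
      dist x y ^ 2 * dist x z ^ 2 - ⟪y -ᵥ x, z -ᵥ x⟫ ^ 2 := by
  have hx : x ∈ line[ℝ, x, z] := left_mem_affineSpan_pair ℝ x z
  have : Nonempty line[ℝ, x, z] := ⟨⟨x, hx⟩⟩
  obtain ⟨p, hp, hperp, hdist⟩ : ∃ p ∈ line[ℝ, x, z],
      ⟪y -ᵥ p, z -ᵥ x⟫ = 0 ∧ infDist y (line[ℝ, x, z] : Set P) = dist y p :=
    ⟨_, orthogonalProjection_mem y,
      Submodule.inner_left_of_mem_orthogonal
        (AffineSubspace.vsub_mem_direction (right_mem_affineSpan_pair ℝ x z) hx)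
        (vsub_orthogonalProjection_mem_direction_orthogonal _ y),
      (dist_orthogonalProjection_eq_infDist _ y).symm⟩
  obtain ⟨t, ht⟩ : ∃ t : ℝ, t • (z -ᵥ x) = p -ᵥ x := by
    have := AffineSubspace.vsub_mem_direction hp hx
    rwa [direction_affineSpan, vectorSpan_pair_rev, Submodule.mem_span_singleton] at this
  have hsplit : y -ᵥ x = (y -ᵥ p) + t • (z -ᵥ x) := by rw [ht, vsub_add_vsub_cancel]
  rw [hdist, dist_eq_norm_vsub V y p, dist_eq_norm_vsub' V x y, dist_eq_norm_vsub' V x z, hsplit,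
    norm_add_sq_real, inner_add_left, real_inner_smul_left, real_inner_smul_right, hperp,
    real_inner_self_eq_norm_sq, norm_smul, Real.norm_eq_abs, mul_pow, sq_abs]
  ring

theorem four_mul_dist_sq_mul_infDist_affineSpan_pair_sq (x y z : P) :
    4 * dist x z ^ 2 * infDist y (line[ℝ, x, z] : Set P) ^ 2 =
      (dist x y + dist y z + dist x z) * (dist x y + dist x z - dist y z) *
        (dist y z + dist x z - dist x y) * (dist x y + dist y z - dist x z) := by
  have hcos : dist y z ^ 2 = dist x y ^ 2 - 2 * ⟪y -ᵥ x, z -ᵥ x⟫ + dist x z ^ 2 := by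
    rw [dist_eq_norm_vsub V y z, ← vsub_sub_vsub_cancel_right y z x, norm_sub_sq_real,
      dist_eq_norm_vsub' V x y, dist_eq_norm_vsub' V x z]
  linear_combination 4 * dist_sq_mul_infDist_affineSpan_pair_sq x y z -
    (dist x y ^ 2 + dist x z ^ 2 - dist y z ^ 2 + 2 * ⟪y -ᵥ x, z -ᵥ x⟫) * hcos

variable {x y z : P}

theorem dist_mul_le_four_mul_infDist_affineSpan_pair_sq (hab : dist x y ≤ dist y z)
    (hbc : dist y z ≤ dist x z) :
    dist x y * (dist x y + dist y z - dist x z) ≤ 4 * infDist y (line[ℝ, x, z] : Set P) ^ 2 := by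
  have heron := four_mul_dist_sq_mul_infDist_affineSpan_pair_sq x y z
  have hδ : 0 ≤ dist x y + dist y z - dist x z := by linarith [dist_triangle x y z]
  have ha : 0 ≤ dist x y := dist_nonneg
  have hc : 0 ≤ dist x z := dist_nonneg
  set a := dist x y
  set b := dist y z
  set c := dist x z
  set D := infDist y (line[ℝ, x, z] : Set P)
  rcases hc.eq_or_lt with hc | hc
  · rw [le_antisymm (by linarith) ha, zero_mul]
    positivity
  refine le_of_mul_le_mul_left ?_ (pow_pos hc 2)
  calc c ^ 2 * (a * (a + b - c)) = (c * a) * c * (a + b - c) := by ring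
    _ ≤ ((a + b + c) * (a + c - b)) * (b + c - a) * (a + b - c) := by
      gcongr
      · exact mul_nonneg (by linarith) (by linarith)
      all_goals linarith
    _ = c ^ 2 * (4 * D ^ 2) := by rw [← heron]; ring

theorem two_mul_infDist_affineSpan_pair_sq_le (hab : dist x y ≤ dist y z)
    (hbc : dist y z ≤ dist x z) :
    2 * infDist y (line[ℝ, x, z] : Set P) ^ 2 ≤ 3 * dist x z * (dist x y + dist y z - dist x z) := by
  have heron := four_mul_dist_sq_mul_infDist_affineSpan_pair_sq x y z
  have hD : infDist y (line[ℝ, x, z] : Set P) ≤ dist x y := by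
    rw [dist_comm]; exact infDist_le_dist_of_mem (left_mem_affineSpan_pair ℝ x z)
  have hδ : 0 ≤ dist x y + dist y z - dist x z := by linarith [dist_triangle x y z]
  have ha : 0 ≤ dist x y := dist_nonneg
  have hc : 0 ≤ dist x z := dist_nonneg
  set a := dist x y
  set b := dist y z
  set c := dist x z
  set D := infDist y (line[ℝ, x, z] : Set P)
  rcases hc.eq_or_lt with hc | hc
  · rw [le_antisymm (hD.trans (by linarith)) infDist_nonneg, ← hc]
    norm_num
  refine le_of_mul_le_mul_left ?_ (pow_pos hc 2)
  calc c ^ 2 * (2 * D ^ 2) = (a + b + c) * (a + c - b) * (b + c - a) * (a + b - c) / 2 := by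
        rw [← heron]; ring
    _ ≤ (3 * c) * c * (2 * c) * (a + b - c) / 2 := by
      gcongr <;> linarith
    _ = c ^ 2 * (3 * c * (a + b - c)) := by ring

end

/-- In Euclidean space, for triples with `dist x y ≤ dist y z ≤ dist x z ≤ A * dist x y`,
one has `β² · diam {x,y,z} ∼ δ({x,y,z})` with constants depending only on `A`, where
`β = dist(y, line(x,z)) / diam` and `δ = dist x y + dist y z - dist x z`. -/
theorem beta_sq_diam_sim_delta (A : ℝ) (hA : 1 < A) :
    ∃ c C : ℝ, 0 < c ∧ 0 < C ∧
      ∀ (d : ℕ) (x y z : EuclideanSpace ℝ (Fin d)),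
        dist x y ≤ dist y z → dist y z ≤ dist x z → dist x z ≤ A * dist x y →
        c * (dist x y + dist y z - dist x z) ≤
            (Metric.infDist y (affineSpan ℝ ({x, z} : Set (EuclideanSpace ℝ (Fin d))) : Set (EuclideanSpace ℝ (Fin d))) /
                max (max (dist x y) (dist y z)) (dist x z)) ^ 2 *
              max (max (dist x y) (dist y z)) (dist x z) ∧
          (Metric.infDist y (affineSpan ℝ ({x, z} : Set (EuclideanSpace ℝ (Fin d))) : Set (EuclideanSpace ℝ (Fin d))) /
                max (max (dist x y) (dist y z)) (dist x z)) ^ 2 *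
              max (max (dist x y) (dist y z)) (dist x z) ≤
            C * (dist x y + dist y z - dist x z) := by
  refine ⟨(4 * A)⁻¹, 3 / 2, by positivity, by norm_num, fun d x y z hab hbc hca => ?_⟩
  rw [max_eq_right hab, max_eq_right hbc]
  have lower := dist_mul_le_four_mul_infDist_affineSpan_pair_sq hab hbc
  have upper := two_mul_infDist_affineSpan_pair_sq_le hab hbc
  have hδ : 0 ≤ dist x y + dist y z - dist x z := by linarith [dist_triangle x y z]
  rcases (dist_nonneg : 0 ≤ dist x z).eq_or_lt with hc | hc
  · have ha : dist x y = 0 := le_antisymm (by linarith) dist_nonneg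
    simp [← hc, ha, le_antisymm (hbc.trans hc.ge) dist_nonneg]
  set D := Metric.infDist y (line[ℝ, x, z] : Set (EuclideanSpace ℝ (Fin d)))
  have hβ : (D / dist x z) ^ 2 * dist x z = D ^ 2 / dist x z := by field_simp
  rw [hβ, le_div_iff₀ hc, div_le_iff₀ hc]
  constructor
  · rw [mul_assoc, inv_mul_le_iff₀ (by positivity)]
    calc (dist x y + dist y z - dist x z) * dist x z
        ≤ (dist x y + dist y z - dist x z) * (A * dist x y) := by gcongr
      _ = A * (dist x y * (dist x y + dist y z - dist x z)) := by ring
      _ ≤ A * (4 * D ^ 2) := by gcongr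
      _ = 4 * A * D ^ 2 := by ring
  · linarith
end

section
/- Let Γ be a connected subset of a metric space. Then the one-dimensional Hausdorff measure of Γ equals that of its closure: H¹(Γ) = H¹(closure(Γ)). -/
/-!
If `x ∈ closure Γ` and `r` is less than the distance from `x` to some point of `Γ`, connectedness
forces `Γ ∩ B(x, r)` to meet every sphere `S(x, s)` with `0 < s < r`; projecting by the
1-Lipschitz map `dist x` gives `H¹(Γ ∩ B(x, r)) ≥ r`. So, when `H¹(Γ) < ∞`, the finite measure
`H¹` restricted to a measurable hull `E` of `Γ` has lower linear density at least one at every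
point of `closure Γ \ E`, a set it does not charge. A Vitali covering argument shows that such a
set is `H¹`-null, whence `H¹(closure Γ) ≤ H¹(E) = H¹(Γ)`.
-/

open MeasureTheory Measure Set Metric Filter Topology
open scoped ENNReal

theorem exists_countable_closedBall_cover_tsum_rpow_le {X : Type*} [PseudoMetricSpace X]
    [MeasurableSpace X] [OpensMeasurableSpace X] {ν : Measure X} [IsFiniteMeasure ν]
    {A U : Set X} {d r₀ : ℝ} (hU : IsOpen U) (hAU : A ⊆ U) (hr₀ : 0 < r₀)
    (hν : ∀ x ∈ A, ∀ r ∈ Ioc 0 r₀, ENNReal.ofReal r ^ d ≤ ν (closedBall x r)) :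
    ∃ (u : Set X) (ρ : X → ℝ), u.Countable ∧ (∀ x ∈ u, ρ x ≤ r₀) ∧
      A ⊆ ⋃ x : u, closedBall (x : X) (4 * ρ x) ∧
      ∑' x : u, ENNReal.ofReal (ρ x) ^ d ≤ ν U := by
  have hρ : ∀ x ∈ A, ∃ ρ ∈ Ioc 0 r₀, closedBall x ρ ⊆ U := by
    intro x hx
    obtain ⟨ε, hε, hεU⟩ := Metric.isOpen_iff.1 hU x (hAU hx)
    exact ⟨min r₀ (ε / 2), ⟨by positivity, min_le_left _ _⟩,
      (closedBall_subset_ball ((min_le_right _ _).trans_lt (half_lt_self hε))).trans hεU⟩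
  choose! ρ hρ hρU using hρ
  obtain ⟨u, huA, hdisj, hcov⟩ := Vitali.exists_disjoint_subfamily_covering_enlargement_closedBall
    A id ρ r₀ (fun x hx => (hρ x hx).2) 4 (by norm_num)
  have hdisj' : Pairwise (Function.onFun Disjoint fun x : u => closedBall (x : X) (ρ x)) :=
    fun x y hxy => hdisj x.2 y.2 (Subtype.coe_ne_coe.2 hxy)
  have hle : ∀ x : u, ENNReal.ofReal (ρ x) ^ d ≤ ν (closedBall (x : X) (ρ x)) :=
    fun x => hν x (huA x.2) _ (hρ x (huA x.2))
  have hcount : u.Countable := by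
    have hpos := Measure.countable_meas_pos_of_disjoint_of_meas_iUnion_ne_top ν
      (fun _ => measurableSet_closedBall) hdisj' (measure_ne_top ν _)
    have huniv : {x : u | 0 < ν (closedBall (x : X) (ρ x))} = univ :=
      eq_univ_of_forall fun x => (ENNReal.rpow_pos (ENNReal.ofReal_pos.2 (hρ x (huA x.2)).1)
        ENNReal.ofReal_ne_top).trans_le (hle x)
    rw [huniv, countable_univ_iff] at hpos
    exact countable_coe_iff.1 hpos
  refine ⟨u, ρ, hcount, fun x hx => (hρ x (huA hx)).2, fun x hx => ?_, ?_⟩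
  · obtain ⟨y, hy, hxy⟩ := hcov x hx
    exact mem_iUnion.2 ⟨⟨y, hy⟩, hxy (mem_closedBall_self (hρ x hx).1.le)⟩
  · calc ∑' x : u, ENNReal.ofReal (ρ x) ^ d
        ≤ ∑' x : u, ν (closedBall (x : X) (ρ x)) := ENNReal.tsum_le_tsum hle
      _ ≤ ν (⋃ x : u, closedBall (x : X) (ρ x)) :=
        tsum_meas_le_meas_iUnion_of_disjoint ν (fun _ => measurableSet_closedBall) hdisj'
      _ ≤ ν U := measure_mono (iUnion_subset fun x => hρU x (huA x.2))

section

variable {X : Type*} [MetricSpace X] [MeasurableSpace X] [BorelSpace X]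

theorem hausdorffMeasure_le_mul_measure_of_subset_isOpen {ν : Measure X} [IsFiniteMeasure ν]
    {A U : Set X} {d r₀ : ℝ} (hd : 0 ≤ d) (hr₀ : 0 < r₀) (hU : IsOpen U) (hAU : A ⊆ U)
    (hν : ∀ x ∈ A, ∀ r ∈ Ioc 0 r₀, ENNReal.ofReal r ^ d ≤ ν (closedBall x r)) :
    μH[d] A ≤ 8 ^ d * ν U := by
  have hcover : ∀ n : ℕ, ∃ (u : Set X) (ρ : X → ℝ), u.Countable ∧
      (∀ x ∈ u, ρ x ≤ min r₀ (1 / (n + 1))) ∧ A ⊆ ⋃ x : u, closedBall (x : X) (4 * ρ x) ∧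
      ∑' x : u, ENNReal.ofReal (ρ x) ^ d ≤ ν U := fun n =>
    exists_countable_closedBall_cover_tsum_rpow_le hU hAU (by positivity)
      fun x hx r hr => hν x hx r ⟨hr.1, hr.2.trans (min_le_left _ _)⟩
  choose u ρ hu hρ hAu hsum using hcover
  have : ∀ n, Countable (u n) := fun n => (hu n).to_subtype
  have hdiam (n : ℕ) (x : u n) :
      ediam (closedBall (x : X) (4 * ρ n x)) ≤ 8 * ENNReal.ofReal (ρ n x) := by
    rw [← ENNReal.ofReal_ofNat 8, ← ENNReal.ofReal_mul (by norm_num)]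
    refine ediam_le_of_forall_dist_le fun y hy z hz => ?_
    calc dist y z ≤ dist y x + dist z x := dist_triangle_right y z x
      _ ≤ 4 * ρ n x + 4 * ρ n x := add_le_add hy hz
      _ = 8 * ρ n x := by ring
  have hmesh : Tendsto (fun n : ℕ => 8 * ENNReal.ofReal (1 / (n + 1))) atTop (𝓝 0) := by
    simpa using ENNReal.Tendsto.const_mul
      (ENNReal.tendsto_ofReal tendsto_one_div_add_atTop_nhds_zero_nat)
      (Or.inr ENNReal.ofNat_ne_top)
  calc μH[d] A ≤ liminf (fun n => ∑' x : u n, ediam (closedBall (x : X) (4 * ρ n x)) ^ d) atTop :=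
        hausdorffMeasure_le_liminf_tsum d A _ hmesh _ (Eventually.of_forall fun n x =>
          (hdiam n x).trans (by gcongr; exact (hρ n x x.2).trans (min_le_right _ _)))
          (Eventually.of_forall hAu)
    _ ≤ 8 ^ d * ν U := by
      refine liminf_le_of_frequently_le' (Frequently.of_forall fun n => ?_)
      calc ∑' x : u n, ediam (closedBall (x : X) (4 * ρ n x)) ^ d
          ≤ ∑' x : u n, 8 ^ d * ENNReal.ofReal (ρ n x) ^ d := by
            gcongr with x
            rw [← ENNReal.mul_rpow_of_nonneg _ _ hd]
            exact ENNReal.rpow_le_rpow (hdiam n x) hd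
        _ = 8 ^ d * ∑' x : u n, ENNReal.ofReal (ρ n x) ^ d := ENNReal.tsum_mul_left
        _ ≤ 8 ^ d * ν U := by gcongr; exact hsum n

theorem hausdorffMeasure_le_mul_measure {ν : Measure X} [IsFiniteMeasure ν] {A : Set X}
    {d r₀ : ℝ} (hd : 0 ≤ d) (hr₀ : 0 < r₀)
    (hν : ∀ x ∈ A, ∀ r ∈ Ioc 0 r₀, ENNReal.ofReal r ^ d ≤ ν (closedBall x r)) :
    μH[d] A ≤ 8 ^ d * ν A := by
  have h0 : (8 : ℝ≥0∞) ^ d ≠ 0 := by positivity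
  have htop : (8 : ℝ≥0∞) ^ d ≠ ⊤ := ENNReal.rpow_ne_top_of_nonneg hd (by norm_num)
  calc μH[d] A ≤ ⨅ (U) (_ : A ⊆ U) (_ : IsOpen U), 8 ^ d * ν U :=
        le_iInf₂ fun U hAU => le_iInf fun hU =>
          hausdorffMeasure_le_mul_measure_of_subset_isOpen hd hr₀ hU hAU hν
    _ = 8 ^ d * ν A := by
      simp only [A.measure_eq_iInf_isOpen, ENNReal.mul_iInf_of_ne h0 htop]

theorem hausdorffMeasure_le_of_forall_ofReal_rpow_le_hausdorffMeasure_inter_ball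
    {Γ B : Set X} {d r₀ : ℝ} (hd : 0 ≤ d) (hr₀ : 0 < r₀) (hΓ : μH[d] Γ ≠ ∞)
    (hdens : ∀ x ∈ B, ∀ r ∈ Ioc 0 r₀, ENNReal.ofReal r ^ d ≤ μH[d] (Γ ∩ ball x r)) :
    μH[d] B ≤ μH[d] Γ := by
  set E := toMeasurable μH[d] Γ
  let ν := μH[d].restrict E
  have : IsFiniteMeasure ν := ⟨by simpa [ν, E, measure_toMeasurable] using hΓ.lt_top⟩
  have hνE : ν Eᶜ = 0 := by
    rw [Measure.restrict_apply (measurableSet_toMeasurable _ _).compl, compl_inter_self,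
      measure_empty]
  have hνB : ν (B \ E) = 0 := measure_mono_null (fun x hx => hx.2) hνE
  have hνball : ∀ x ∈ B \ E, ∀ r ∈ Ioc 0 r₀, ENNReal.ofReal r ^ d ≤ ν (closedBall x r) := by
    intro x hx r hr
    rw [Measure.restrict_apply measurableSet_closedBall, inter_comm]
    exact (hdens x hx.1 r hr).trans (measure_mono
      (inter_subset_inter (subset_toMeasurable _ _) ball_subset_closedBall))
  have hnull : μH[d] (B \ E) = 0 := by
    simpa [hνB] using hausdorffMeasure_le_mul_measure hd hr₀ hνball
  calc μH[d] B ≤ μH[d] E := measure_mono_ae (ae_le_set.2 hnull)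
    _ = μH[d] Γ := measure_toMeasurable Γ

theorem IsPreconnected.ofReal_le_hausdorffMeasure_inter_ball {Γ : Set X} (hΓ : IsPreconnected Γ)
    {x z : X} (hx : x ∈ closure Γ) (hz : z ∈ Γ) {r : ℝ} (hrz : r ≤ dist x z) :
    ENNReal.ofReal r ≤ μH[1] (Γ ∩ ball x r) := by
  have hord : OrdConnected (dist x '' Γ) :=
    (hΓ.image _ (continuous_const.dist continuous_id).continuousOn).ordConnected
  have hsub : Ioo 0 r ⊆ dist x '' (Γ ∩ ball x r) := by
    intro s hs
    obtain ⟨y, hyΓ, hxy⟩ := Metric.mem_closure_iff.1 hx s hs.1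
    obtain ⟨w, hwΓ, rfl⟩ :=
      hord.out (mem_image_of_mem _ hyΓ) (mem_image_of_mem _ hz) ⟨hxy.le, hs.2.le.trans hrz⟩
    exact ⟨w, ⟨hwΓ, mem_ball'.2 hs.2⟩, rfl⟩
  calc ENNReal.ofReal r = μH[1] (Ioo (0 : ℝ) r) := by
        rw [hausdorffMeasure_real, Real.volume_Ioo, sub_zero]
    _ ≤ μH[1] (dist x '' (Γ ∩ ball x r)) := measure_mono hsub
    _ ≤ μH[1] (Γ ∩ ball x r) := by
      simpa using (LipschitzWith.dist_right x).hausdorffMeasure_image_le zero_le_one (Γ ∩ ball x r)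

theorem IsPreconnected.exists_forall_ofReal_le_hausdorffMeasure_inter_ball {Γ : Set X}
    (hΓ : IsPreconnected Γ) (hnt : Γ.Nontrivial) :
    ∃ r₀ > 0, ∀ x ∈ closure Γ, ∀ r ≤ r₀, ENNReal.ofReal r ≤ μH[1] (Γ ∩ ball x r) := by
  obtain ⟨a, ha, b, hb, hab⟩ := hnt
  refine ⟨dist a b / 2, by positivity [dist_pos.2 hab], fun x hx r hr => ?_⟩
  rcases le_or_gt (dist a b / 2) (dist x a) with hxa | hxa
  · exact hΓ.ofReal_le_hausdorffMeasure_inter_ball hx ha (hr.trans hxa)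
  · refine hΓ.ofReal_le_hausdorffMeasure_inter_ball hx hb (hr.trans ?_)
    linarith [dist_triangle_left a b x]

end

/-- For a connected subset `Γ` of a metric space, `H¹(Γ) = H¹(closure Γ)`. -/
theorem hausdorff_length_closure {M : Type*} [MetricSpace M] [MeasurableSpace M]
    [BorelSpace M] (Γ : Set M) (hΓ : IsConnected Γ) :
    μH[1] Γ = μH[1] (closure Γ) := by
  refine le_antisymm (measure_mono subset_closure) ?_
  rcases Γ.subsingleton_or_nontrivial with hsub | hnt
  · rcases hsub.eq_empty_or_singleton with rfl | ⟨x, rfl⟩ <;> simp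
  obtain hfin | hfin := eq_or_ne (μH[1] Γ) ⊤
  · simp [hfin]
  obtain ⟨r₀, hr₀, hdens⟩ :=
    hΓ.isPreconnected.exists_forall_ofReal_le_hausdorffMeasure_inter_ball hnt
  refine hausdorffMeasure_le_of_forall_ofReal_rpow_le_hausdorffMeasure_inter_ball zero_le_one hr₀
    hfin fun x hx r hr => ?_
  rw [ENNReal.rpow_one]
  exact hdens x hx r hr.2
end

section
/- Let Γ be a closed connected subset of a complete metric space with H¹(Γ) < ∞. Then Γ is compact. -/
/-!
If a closed connected set `Γ` of finite length were not compact, it would not be totally bounded,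
so for some `ε > 0` it would contain arbitrarily large `ε`-separated families. Around each point of
such a family the closed ball of radius `ε / 2` meets `Γ` in a set of length at least `ε / 2`, since
`Γ` connects the centre to a point outside the ball. These pieces are pairwise disjoint, so their
lengths add up to more than `H¹(Γ)`.
-/

open MeasureTheory Metric Set
open scoped ENNReal NNReal

lemma Metric.totallyBounded_of_forall_packingNumber_ne_top {X : Type*} [PseudoEMetricSpace X]
    {A : Set X} (h : ∀ ε : ℝ≥0, ε ≠ 0 → packingNumber ε A ≠ ⊤) : TotallyBounded A := by
  refine EMetric.totallyBounded_iff'.2 fun ε hε => ?_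
  obtain ⟨δ, hδ, hδε⟩ := ENNReal.lt_iff_exists_nnreal_btwn.1 hε
  have hδA := h δ (by exact_mod_cast hδ.ne')
  refine ⟨maximalSeparatedSet δ A, maximalSeparatedSet_subset, ?_, ?_⟩
  · exact encard_ne_top_iff.1 ((encard_maximalSeparatedSet hδA).trans_ne hδA)
  · refine ((isCover_iff_subset_iUnion_closedEBall).1 (isCover_maximalSeparatedSet hδA)).trans ?_
    exact iUnion₂_mono fun y _ z hz => mem_eball.2 ((mem_closedEBall.1 hz).trans_lt hδε)

section Length

variable {M : Type*} [MetricSpace M] [MeasurableSpace M] [BorelSpace M]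

/-- The distance to `x` is `1`-Lipschitz and maps `Γ ∩ closedBall x r` onto `[0, r]`. -/
lemma IsPreconnected.ofReal_le_hausdorffMeasure_inter_closedBall {Γ : Set M}
    (hΓ : IsPreconnected Γ) {x y : M} (hx : x ∈ Γ) (hy : y ∈ Γ) {r : ℝ} (hr : r ≤ dist y x) :
    ENNReal.ofReal r ≤ μH[1] (Γ ∩ closedBall x r) := by
  have hlip : LipschitzWith 1 (dist · x) := LipschitzWith.dist_left x
  have hIcc : Icc 0 (dist y x) ⊆ (dist · x) '' Γ :=
    (hΓ.image _ hlip.continuous.continuousOn).ordConnected.out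
      ⟨x, hx, dist_self x⟩ ⟨y, hy, rfl⟩
  have hsurj : Icc 0 r ⊆ (dist · x) '' (Γ ∩ closedBall x r) := by
    rintro t ⟨ht0, htr⟩
    obtain ⟨z, hz, rfl⟩ := hIcc ⟨ht0, htr.trans hr⟩
    exact ⟨z, ⟨hz, htr⟩, rfl⟩
  calc ENNReal.ofReal r = μH[1] (Icc (0 : ℝ) r) := by
        rw [hausdorffMeasure_real, Real.volume_Icc, sub_zero]
    _ ≤ μH[1] ((dist · x) '' (Γ ∩ closedBall x r)) := measure_mono hsurj
    _ ≤ μH[1] (Γ ∩ closedBall x r) := by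
        simpa using hlip.hausdorffMeasure_image_le zero_le_one (Γ ∩ closedBall x r)

lemma Metric.IsSeparated.encard_mul_le_hausdorffMeasure {Γ C : Set M} (hΓm : MeasurableSet Γ)
    (hΓ : IsPreconnected Γ) {ε : ℝ≥0} (hCΓ : C ⊆ Γ) (hC : IsSeparated ε C)
    (hCnt : C.Nontrivial) :
    C.encard * ENNReal.ofReal (ε / 2) ≤ μH[1] Γ := by
  let piece : C → Set M := fun c => Γ ∩ closedBall c (ε / 2)
  have hpiece : ∀ c : C, ENNReal.ofReal (ε / 2) ≤ μH[1] (piece c) := fun c => by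
    obtain ⟨c', hc'C, hc'c⟩ := hCnt.exists_ne c
    have hfar : (ε : ℝ) < dist c' c := by
      simpa [edist_dist] using hC hc'C c.2 hc'c
    exact hΓ.ofReal_le_hausdorffMeasure_inter_closedBall (hCΓ c.2) (hCΓ hc'C)
      (by linarith [ε.coe_nonneg])
  have hdisj : Pairwise (Function.onFun Disjoint piece) := fun c d hcd => by
    refine disjoint_left.2 fun z hzc hzd => ?_
    have hfar : (ε : ℝ) < dist (c : M) d := by
      simpa [edist_dist] using hC c.2 d.2 (Subtype.coe_ne_coe.2 hcd)
    have hzc' : dist z c ≤ ε / 2 := hzc.2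
    have hzd' : dist z d ≤ ε / 2 := hzd.2
    linarith [dist_triangle_left (c : M) d z]
  calc C.encard * ENNReal.ofReal (ε / 2) = ∑' _ : C, ENNReal.ofReal (ε / 2) :=
        (ENNReal.tsum_set_const C _).symm
    _ ≤ ∑' c, μH[1] (piece c) := ENNReal.tsum_le_tsum hpiece
    _ ≤ μH[1] (⋃ c, piece c) :=
        tsum_meas_le_meas_iUnion_of_disjoint _ (fun c => hΓm.inter measurableSet_closedBall) hdisj
    _ ≤ μH[1] Γ := measure_mono (iUnion_subset fun _ => inter_subset_left)

lemma IsPreconnected.packingNumber_ne_top_of_hausdorffMeasure_ne_top {Γ : Set M}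
    (hΓm : MeasurableSet Γ) (hΓ : IsPreconnected Γ) (hfin : μH[1] Γ ≠ ⊤) {ε : ℝ≥0}
    (hε : ε ≠ 0) : packingNumber ε Γ ≠ ⊤ := by
  intro htop
  obtain ⟨n, hn⟩ := ENNReal.exists_nat_mul_gt (a := ENNReal.ofReal (ε / 2))
    (by simpa using pos_iff_ne_zero.2 hε) hfin
  have hlt : ((n + 1 : ℕ) : ℕ∞) < packingNumber ε Γ := htop ▸ ENat.natCast_lt_top _
  simp only [packingNumber, lt_iSup_iff] at hlt
  obtain ⟨C, hCΓ, hC, hCn⟩ := hlt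
  have hnC : (n : ℝ≥0∞) ≤ C.encard := by
    have : (n : ℕ∞) ≤ C.encard := le_trans (by norm_cast; omega) hCn.le
    exact_mod_cast this
  have hCnt : C.Nontrivial := one_lt_encard_iff_nontrivial.1 <|
    lt_of_le_of_lt (by norm_cast; omega) hCn
  refine (hn.trans_le ?_).false
  calc (n : ℝ≥0∞) * ENNReal.ofReal (ε / 2) ≤ C.encard * ENNReal.ofReal (ε / 2) := by gcongr
    _ ≤ μH[1] Γ := hC.encard_mul_le_hausdorffMeasure hΓm hΓ hCΓ hCnt

end Length

/-- A closed connected subset of finite `H¹` measure of a complete metric space is compact. -/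
theorem closed_connected_finite_length_compact {M : Type*} [MetricSpace M] [CompleteSpace M]
    [MeasurableSpace M] [BorelSpace M] (Γ : Set M) (hclosed : IsClosed Γ)
    (hconn : IsConnected Γ) (hfin : μH[1] Γ < ⊤) :
    IsCompact Γ :=
  (totallyBounded_of_forall_packingNumber_ne_top fun _ hε =>
    hconn.isPreconnected.packingNumber_ne_top_of_hausdorffMeasure_ne_top
      hclosed.measurableSet hfin.ne hε).isCompact_of_isClosed hclosed
end

section
/- The one-third trick: for every arc J (interval) in the circle ℝ/ℤ with diam(J) < 1/6, there exists a dyadic interval I belonging either to the standard dyadic decomposition of [0,1] ≅ ℝ/ℤ, or to the dyadic decomposition shifted by 1/3, such that J ⊆ I and diam(I) ≤ 6·diam(J). -/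
open Set

private lemma one_third_image_mono (S T : Set ℝ) (m : ℤ)
    (h : ∀ x ∈ S, x - m ∈ T) :
    ((fun x:ℝ => (x : AddCircle (1:ℝ))) '' S) ⊆ (fun x:ℝ => (x : AddCircle (1:ℝ))) '' T := by
  rintro _ ⟨x, hx, rfl⟩
  refine ⟨x - m, h x hx, ?_⟩
  have hm : ((m:ℝ) : AddCircle (1:ℝ)) = 0 := by
    rw [AddCircle.coe_eq_zero_iff]
    exact ⟨m, by simp⟩
  have : ((x - (m:ℝ) : ℝ) : AddCircle (1:ℝ)) = (x : AddCircle (1:ℝ)) - ((m:ℝ) : AddCircle (1:ℝ)) := rfl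
  simp [this, hm]

private lemma one_third_grid_lb (n : ℕ) (m : ℤ) :
    (2:ℝ)^(-(n:ℤ))/3 ≤ |1/3 + (m:ℝ) * (2:ℝ)^(-(n:ℤ))| := by
  have h2 : (0:ℝ) < 2^n := by positivity
  have hne : (2:ℤ)^n + 3*m ≠ 0 := by
    intro h
    have hd : (3:ℤ) ∣ 2^n := ⟨-m, by linarith⟩
    have h32 := Int.Prime.dvd_pow' (by norm_num) hd
    norm_num at h32
  have h1 : (1:ℝ) ≤ |(((2:ℤ)^n + 3*m : ℤ) : ℝ)| := by
    exact_mod_cast Int.one_le_abs hne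
  have heq : 1/3 + (m:ℝ)*(2:ℝ)^(-(n:ℤ)) = (((2:ℤ)^n + 3*m : ℤ) : ℝ) / (3 * 2^n) := by
    push_cast
    rw [zpow_neg, zpow_natCast]
    field_simp
  have ht : (2:ℝ)^(-(n:ℤ)) = ((2:ℝ)^n)⁻¹ := by rw [zpow_neg, zpow_natCast]
  rw [heq, abs_div, abs_of_pos (by positivity : (0:ℝ) < 3*2^n), ht]
  rw [div_le_div_iff₀ (by norm_num) (by positivity)]
  have h3 : ((2:ℝ)^n)⁻¹ * (3 * 2^n) = 3 := by field_simp
  rw [h3]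
  linarith

private lemma one_third_cover (n : ℕ) (a b : ℝ)
    (H : ∀ j : ℤ, (j:ℝ) * (2:ℝ)^(-(n:ℤ)) ∉ Set.Ioo a b) :
    ∃ (k : ℕ) (m : ℤ), k < 2^n ∧
      ∀ x ∈ Set.Icc a b, x - m ∈ Set.Icc ((k:ℝ)/2^n) (((k:ℝ)+1)/2^n) := by
  have ht : (2:ℝ)^(-(n:ℤ)) = ((2:ℝ)^n)⁻¹ := by rw [zpow_neg, zpow_natCast]
  have h2 : (0:ℝ) < 2^n := by positivity
  set j := ⌊a * 2^n⌋ with hj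
  have hj1 : (j:ℝ) ≤ a * 2^n := Int.floor_le _
  have hj2 : a * 2^n < (j:ℝ) + 1 := Int.lt_floor_add_one _
  have hb : b * 2^n ≤ (j:ℝ) + 1 := by
    by_contra h
    push_neg at h
    refine H (j+1) ⟨?_, ?_⟩
    · rw [ht]; push_cast
      rw [← div_eq_mul_inv, lt_div_iff₀ h2]
      exact hj2
    · rw [ht]; push_cast
      rw [← div_eq_mul_inv, div_lt_iff₀ h2]
      exact h
  have hk0 : 0 ≤ j % 2^n := Int.emod_nonneg _ (by positivity)
  have hk1 : j % 2^n < 2^n := Int.emod_lt_of_pos _ (by positivity)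
  have hdiv : (2:ℤ)^n * (j / 2^n) + j % 2^n = j := Int.mul_ediv_add_emod j (2^n)
  refine ⟨(j % 2^n).toNat, j / 2^n, ?_, ?_⟩
  · have hlt : ((j % 2^n).toNat : ℤ) < (2:ℤ)^n := by
      rw [Int.toNat_of_nonneg hk0]; exact hk1
    exact_mod_cast hlt
  · intro x hx
    have hkR : ((j % 2^n).toNat : ℝ) = (j:ℝ) - 2^n * ((j / 2^n : ℤ) : ℝ) := by
      have h4 : (((j % 2^n).toNat : ℤ) : ℝ) = ((j % 2^n : ℤ) : ℝ) := by
        rw [Int.toNat_of_nonneg hk0]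
      push_cast at h4 ⊢
      have hdivR : (2:ℝ)^n * ((j / 2^n : ℤ) : ℝ) + ((j % 2^n : ℤ) : ℝ) = (j:ℝ) := by
        exact_mod_cast hdiv
      linarith
    obtain ⟨hx1, hx2⟩ := hx
    constructor
    · rw [hkR, div_le_iff₀ h2]
      nlinarith [mul_le_mul_of_nonneg_right hx1 h2.le]
    · rw [hkR, le_div_iff₀ h2]
      nlinarith [mul_le_mul_of_nonneg_right hx2 h2.le]

/-- The one-third trick: every arc `J` of the circle `ℝ/ℤ` of length `< 1/6` is contained
in a dyadic interval from the standard dyadic decomposition of `[0,1]` or from the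
decomposition shifted by `1/3`, of length at most `6 · diam J`. -/
theorem one_third_trick (a b : ℝ) (hab : a < b) (hlen : b - a < 1 / 6) :
    ∃ (n k : ℕ) (c : ℝ), (c = 0 ∨ c = 1 / 3) ∧ k < 2 ^ n ∧
      (2 : ℝ) ^ (-(n : ℤ)) ≤ 6 * (b - a) ∧
      ((fun x : ℝ => (x : AddCircle (1 : ℝ))) '' Set.Icc a b) ⊆
        ((fun x : ℝ => (x : AddCircle (1 : ℝ))) ''
          Set.Icc (c + (k : ℝ) / 2 ^ n) (c + ((k : ℝ) + 1) / 2 ^ n)) := by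
  have hℓ : 0 < b - a := sub_pos.2 hab
  -- choose n with 3(b-a) < 2^(-n) ≤ 6(b-a)
  obtain ⟨n, hn1, hn2⟩ : ∃ n : ℕ, 3 * (b - a) < (2:ℝ)^(-(n:ℤ)) ∧ (2:ℝ)^(-(n:ℤ)) ≤ 6 * (b - a) := by
    have hex : ∃ n : ℕ, (2:ℝ)^(-(n:ℤ)) ≤ 6 * (b - a) := by
      obtain ⟨n, hn⟩ := exists_pow_lt_of_lt_one (by linarith : (0:ℝ) < 6 * (b - a))
        (by norm_num : (1:ℝ)/2 < 1)
      refine ⟨n, le_of_lt ?_⟩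
      have : (2:ℝ)^(-(n:ℤ)) = ((1:ℝ)/2)^n := by
        rw [zpow_neg, zpow_natCast, one_div, inv_pow]
      rw [this]; exact hn
    classical
    set n₀ := Nat.find hex with hn₀
    have hfind : (2:ℝ)^(-(n₀:ℤ)) ≤ 6 * (b - a) := Nat.find_spec hex
    have hn₀pos : n₀ ≠ 0 := by
      intro h
      rw [h] at hfind
      norm_num at hfind
      linarith
    have hprev : ¬ ((2:ℝ)^(-((n₀-1 : ℕ):ℤ)) ≤ 6 * (b - a)) :=
      Nat.find_min hex (by omega)
    push_neg at hprev
    refine ⟨n₀, ?_, hfind⟩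
    have hrel : (2:ℝ)^(-((n₀-1 : ℕ):ℤ)) = 2 * (2:ℝ)^(-(n₀:ℤ)) := by
      rw [← zpow_one_add₀ (by norm_num : (2:ℝ) ≠ 0)]
      congr 1
      omega
    rw [hrel] at hprev
    linarith
  by_cases H : ∀ j : ℤ, (j:ℝ) * (2:ℝ)^(-(n:ℤ)) ∉ Set.Ioo a b
  · obtain ⟨k, m, hk, hmem⟩ := one_third_cover n a b H
    refine ⟨n, k, 0, Or.inl rfl, hk, hn2, ?_⟩
    apply one_third_image_mono _ _ m
    intro x hx
    simpa using hmem x hx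
  · push_neg at H
    obtain ⟨j, hj⟩ := H
    have H' : ∀ j' : ℤ, (j':ℝ) * (2:ℝ)^(-(n:ℤ)) ∉ Set.Ioo (a - 1/3) (b - 1/3) := by
      intro j' hj'
      have hgl := one_third_grid_lb n (j' - j)
      have habs : |1/3 + ((j' - j : ℤ):ℝ) * (2:ℝ)^(-(n:ℤ))| < b - a := by
        rw [abs_lt]
        push_cast
        rw [sub_mul]
        obtain ⟨hA, hB⟩ := hj
        obtain ⟨hC, hD⟩ := hj'
        constructor <;> linarith
      linarith
    obtain ⟨k, m, hk, hmem⟩ := one_third_cover n (a - 1/3) (b - 1/3) H'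
    refine ⟨n, k, 1/3, Or.inr rfl, hk, hn2, ?_⟩
    apply one_third_image_mono _ _ m
    intro x hx
    have hmx := hmem (x - 1/3) ⟨by linarith [hx.1], by linarith [hx.2]⟩
    exact ⟨by linarith [hmx.1], by linarith [hmx.2]⟩
end

section
/- Let γ : 𝕋 → M be a curve into a metric space and fix v, r ∈ [0,1]. Consider the affine map ψ^{v,r}(t) = v + r·t mod 1. Then for any dyadic interval I ⊆ [0,1] with ψ^{v,r}(I) = [x,z] and any y ∈ [x,z], one has δ₁(γ(x),γ(y),γ(z)) ≤ Σ δ_d(γ∘ψ^{v,r}(I′)), where the sum is over dyadic subintervals I′ ⊆ I with y ∈ ψ^{v,r}(I′), and δ_d(γ∘ψ^{v,r}([a,b])) := δ₁(γ(ψ^{v,r}(a)), γ(ψ^{v,r}((a+b)/2)), γ(ψ^{v,r}(b))). -/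
/-!
Split the dyadic interval `[a, b] ∋ t` at its midpoint `m` and keep the half `[a', b']` containing
`t`. The triangle inequality through `m` gives
`δ₁(γa, γt, γb) ≤ δ₁(γa, γm, γb) + δ₁(γa', γt, γb')`, and iterating this along the tower of
dyadic intervals containing `t` bounds the left side by a partial sum of the `δ_d` plus the defect
of a dyadic interval of length `2⁻ᴺ` around `t`. By continuity at `t` that last defect tends to
`0` as `N → ∞`.
-/

open Filter Topology

def dyadicIcc (m j : ℕ) : Set ℝ := Set.Icc ((j : ℝ) / 2 ^ m) (((j : ℝ) + 1) / 2 ^ m)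

lemma dyadicIcc_eq_union (m j : ℕ) :
    dyadicIcc m j = dyadicIcc (m + 1) (2 * j) ∪ dyadicIcc (m + 1) (2 * j + 1) := by
  have h2 : (2 : ℝ) ^ (m + 1) = 2 * 2 ^ m := pow_succ' 2 m
  simp only [dyadicIcc, Nat.cast_add, Nat.cast_mul, Nat.cast_ofNat, Nat.cast_one]
  rw [Set.Icc_union_Icc_eq_Icc (by gcongr; linarith) (by gcongr; linarith), h2]
  congr 1 <;> field_simp; ring

lemma dyadicIcc_succ_subset {m j j' : ℕ} (hj' : j' = 2 * j ∨ j' = 2 * j + 1) :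
    dyadicIcc (m + 1) j' ⊆ dyadicIcc m j := by
  rw [dyadicIcc_eq_union m j]
  rcases hj' with rfl | rfl
  exacts [Set.subset_union_left, Set.subset_union_right]

lemma tendsto_dyadicIcc_endpoints {t : ℝ} {m J : ℕ → ℕ} (hm : Tendsto m atTop atTop)
    (ht : ∀ i, t ∈ dyadicIcc (m i) (J i)) :
    Tendsto (fun i => (J i : ℝ) / 2 ^ m i) atTop (𝓝 t) ∧
      Tendsto (fun i => ((J i : ℝ) + 1) / 2 ^ m i) atTop (𝓝 t) := by
  have hlen : Tendsto (fun i => ((1 : ℝ) / 2) ^ m i) atTop (𝓝 0) :=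
    (_root_.tendsto_pow_atTop_nhds_zero_of_lt_one (by norm_num) (by norm_num)).comp hm
  have hsplit : ∀ i, ((J i : ℝ) + 1) / 2 ^ m i = (J i : ℝ) / 2 ^ m i + (1 / 2) ^ m i := by
    intro i; rw [one_div_pow, add_div, one_div]
  constructor
  · refine tendsto_of_tendsto_of_tendsto_of_le_of_le (g := fun i => t - (1 / 2) ^ m i)
      (by simpa using tendsto_const_nhds.sub hlen) tendsto_const_nhds (fun i => ?_)
      (fun i => (ht i).1)
    linarith [(ht i).2, hsplit i]
  · refine tendsto_of_tendsto_of_tendsto_of_le_of_le (h := fun i => t + (1 / 2) ^ m i)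
      tendsto_const_nhds (by simpa using tendsto_const_nhds.add hlen) (fun i => (ht i).2)
      (fun i => ?_)
    linarith [(ht i).1, hsplit i]

section DyadicTower

variable (t : ℝ) (n k : ℕ)

open Classical in
noncomputable def dyadicTower : ℕ → ℕ
  | 0 => k
  | i + 1 =>
    if t ∈ dyadicIcc (n + i + 1) (2 * dyadicTower i) then 2 * dyadicTower i
    else 2 * dyadicTower i + 1

lemma dyadicTower_succ (i : ℕ) :
    dyadicTower t n k (i + 1) = 2 * dyadicTower t n k i ∨
      dyadicTower t n k (i + 1) = 2 * dyadicTower t n k i + 1 := by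
  rw [dyadicTower]
  split_ifs
  exacts [Or.inl rfl, Or.inr rfl]

lemma mem_dyadicIcc_dyadicTower (ht : t ∈ dyadicIcc n k) (i : ℕ) :
    t ∈ dyadicIcc (n + i) (dyadicTower t n k i) := by
  induction i with
  | zero => exact ht
  | succ i ih =>
    rw [dyadicTower]
    split_ifs with hleft
    · exact hleft
    · rw [dyadicIcc_eq_union] at ih
      exact ih.resolve_left hleft

lemma dyadicIcc_dyadicTower_subset (i : ℕ) :
    dyadicIcc (n + i) (dyadicTower t n k i) ⊆ dyadicIcc n k := by
  induction i with
  | zero => exact subset_rfl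
  | succ i ih => exact (dyadicIcc_succ_subset (dyadicTower_succ t n k i)).trans ih

end DyadicTower

section TriangleDefect

variable {M : Type*} [PseudoMetricSpace M]

def triangleDefect (x y z : M) : ℝ := dist x y + dist y z - dist x z

lemma triangleDefect_le_add_left (a b c x : M) :
    triangleDefect a x c ≤ triangleDefect a b c + triangleDefect a x b := by
  unfold triangleDefect; linarith [dist_triangle x b c]

lemma triangleDefect_le_add_right (a b c x : M) :
    triangleDefect a x c ≤ triangleDefect a b c + triangleDefect b x c := by
  unfold triangleDefect; linarith [dist_triangle a b x]

lemma tendsto_triangleDefect_zero {ι : Type*} {l : Filter ι} {x z : ι → M} {y : M}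
    (hx : Tendsto x l (𝓝 y)) (hz : Tendsto z l (𝓝 y)) :
    Tendsto (fun i => triangleDefect (x i) y (z i)) l (𝓝 0) := by
  have hy : Tendsto (fun _ : ι => y) l (𝓝 y) := tendsto_const_nhds
  simpa [triangleDefect] using ((hx.dist hy).add (hy.dist hz)).sub (hx.dist hz)

variable (c : ℝ → M)

noncomputable def triangleDefectOn (t : ℝ) (m j : ℕ) : ℝ :=
  triangleDefect (c (j / 2 ^ m)) (c t) (c ((j + 1) / 2 ^ m))

noncomputable def dyadicDefect (m j : ℕ) : ℝ := triangleDefectOn c (((j : ℝ) + 1 / 2) / 2 ^ m) m j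

lemma triangleDefectOn_le_dyadicDefect_add (t : ℝ) {m j j' : ℕ}
    (hj' : j' = 2 * j ∨ j' = 2 * j + 1) :
    triangleDefectOn c t m j ≤ dyadicDefect c m j + triangleDefectOn c t (m + 1) j' := by
  have h2 : (2 : ℝ) ^ (m + 1) = 2 * 2 ^ m := pow_succ' 2 m
  have hleft : ((2 * j : ℕ) : ℝ) / 2 ^ (m + 1) = j / 2 ^ m := by
    rw [h2]; push_cast; field_simp
  have hmid : ((2 * j : ℕ) + 1 : ℝ) / 2 ^ (m + 1) = (j + 1 / 2) / 2 ^ m := by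
    rw [h2]; push_cast; field_simp
  have hmid' : ((2 * j + 1 : ℕ) : ℝ) / 2 ^ (m + 1) = (j + 1 / 2) / 2 ^ m := by
    rw [← hmid]; push_cast; rfl
  have hright : ((2 * j + 1 : ℕ) + 1 : ℝ) / 2 ^ (m + 1) = (j + 1) / 2 ^ m := by
    rw [h2]; push_cast; field_simp; ring
  rcases hj' with rfl | rfl
  · rw [triangleDefectOn, triangleDefectOn, hleft, hmid]
    exact triangleDefect_le_add_left _ _ _ _
  · rw [triangleDefectOn, triangleDefectOn, hright, hmid']
    exact triangleDefect_le_add_right _ _ _ _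

end TriangleDefect

section Telescoping

variable {M : Type*} [PseudoMetricSpace M] (c : ℝ → M) (t : ℝ)

lemma ofReal_triangleDefectOn_le_sum_add {m : ℕ} {J : ℕ → ℕ}
    (hJ : ∀ i, J (i + 1) = 2 * J i ∨ J (i + 1) = 2 * J i + 1) (N : ℕ) :
    ENNReal.ofReal (triangleDefectOn c t m (J 0)) ≤
      ∑ i ∈ Finset.range N, ENNReal.ofReal (dyadicDefect c (m + i) (J i)) +
        ENNReal.ofReal (triangleDefectOn c t (m + N) (J N)) := by
  induction N with
  | zero => simp
  | succ N ih =>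
    calc ENNReal.ofReal (triangleDefectOn c t m (J 0))
        _ ≤ ∑ i ∈ Finset.range N, ENNReal.ofReal (dyadicDefect c (m + i) (J i)) +
            (ENNReal.ofReal (dyadicDefect c (m + N) (J N)) +
              ENNReal.ofReal (triangleDefectOn c t (m + N + 1) (J (N + 1)))) := by
          grw [ih, ← ENNReal.ofReal_add_le,
            triangleDefectOn_le_dyadicDefect_add c t (hJ N)]
        _ = _ := by rw [Finset.sum_range_succ, ← add_assoc]; rfl

theorem ofReal_triangleDefectOn_le_tsum_dyadicDefect (hc : ContinuousAt c t) {n k : ℕ}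
    (ht : t ∈ dyadicIcc n k) :
    ENNReal.ofReal (triangleDefectOn c t n k) ≤
      ∑' p : {p : ℕ × ℕ // n ≤ p.1 ∧ dyadicIcc p.1 p.2 ⊆ dyadicIcc n k ∧ t ∈ dyadicIcc p.1 p.2},
        ENNReal.ofReal (dyadicDefect c p.1.1 p.1.2) := by
  set J := dyadicTower t n k
  let tower : ℕ → {p : ℕ × ℕ // n ≤ p.1 ∧ dyadicIcc p.1 p.2 ⊆ dyadicIcc n k ∧
      t ∈ dyadicIcc p.1 p.2} := fun i =>
    ⟨(n + i, J i), n.le_add_right i, dyadicIcc_dyadicTower_subset t n k i,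
      mem_dyadicIcc_dyadicTower t n k ht i⟩
  have tower_injective : Function.Injective tower := fun i j hij => by
    simpa [tower] using congrArg (fun p => p.1.1) hij
  have tail :
      Tendsto (fun N => ENNReal.ofReal (triangleDefectOn c t (n + N) (J N))) atTop (𝓝 0) := by
    obtain ⟨hleft, hright⟩ := tendsto_dyadicIcc_endpoints
      (tendsto_atTop_mono (Nat.le_add_left · n) tendsto_id)
      (mem_dyadicIcc_dyadicTower t n k ht)
    exact ENNReal.ofReal_zero ▸ ENNReal.tendsto_ofReal
      (tendsto_triangleDefect_zero (hc.tendsto.comp hleft) (hc.tendsto.comp hright))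
  refine ge_of_tendsto' (by simpa using tail.const_add _) fun N => ?_
  calc ENNReal.ofReal (triangleDefectOn c t n k)
      _ ≤ _ := ofReal_triangleDefectOn_le_sum_add c t (dyadicTower_succ t n k) N
      _ ≤ _ := by
        grw [ENNReal.sum_le_tsum, ENNReal.tsum_comp_le_tsum_of_injective tower_injective
          (fun p => ENNReal.ofReal (dyadicDefect c p.1.1 p.1.2))]

end Telescoping

theorem delta_one_le_sum_delta_d_general {M : Type*} [MetricSpace M] (γ : ℝ → M)
    (hcont : Continuous γ)
    (v r : ℝ)
    (n k : ℕ) (t : ℝ)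
    (ht : t ∈ Set.Icc ((k : ℝ) / 2 ^ n) (((k : ℝ) + 1) / 2 ^ n)) :
    ENNReal.ofReal
        (dist (γ (v + r * ((k : ℝ) / 2 ^ n))) (γ (v + r * t)) +
          dist (γ (v + r * t)) (γ (v + r * (((k : ℝ) + 1) / 2 ^ n))) -
          dist (γ (v + r * ((k : ℝ) / 2 ^ n))) (γ (v + r * (((k : ℝ) + 1) / 2 ^ n)))) ≤
      ∑' p : {p : ℕ × ℕ //
          n ≤ p.1 ∧
          Set.Icc ((p.2 : ℝ) / 2 ^ p.1) (((p.2 : ℝ) + 1) / 2 ^ p.1) ⊆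
            Set.Icc ((k : ℝ) / 2 ^ n) (((k : ℝ) + 1) / 2 ^ n) ∧
          t ∈ Set.Icc ((p.2 : ℝ) / 2 ^ p.1) (((p.2 : ℝ) + 1) / 2 ^ p.1)},
        ENNReal.ofReal
          (dist (γ (v + r * ((p.1.2 : ℝ) / 2 ^ p.1.1)))
              (γ (v + r * (((p.1.2 : ℝ) + 1 / 2) / 2 ^ p.1.1))) +
            dist (γ (v + r * (((p.1.2 : ℝ) + 1 / 2) / 2 ^ p.1.1)))
              (γ (v + r * (((p.1.2 : ℝ) + 1) / 2 ^ p.1.1))) -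
            dist (γ (v + r * ((p.1.2 : ℝ) / 2 ^ p.1.1)))
              (γ (v + r * (((p.1.2 : ℝ) + 1) / 2 ^ p.1.1)))) :=
  ofReal_triangleDefectOn_le_tsum_dyadicDefect (fun s => γ (v + r * s)) t
    (by fun_prop) ht

/-- Iterated triangle inequality along a dyadic tower: for a continuous curve
`γ` on the circle (a `1`-periodic map `γ : ℝ → M`), `v, r ∈ [0,1]`,
`ψ^{v,r}(t) = v + r·t`, a dyadic interval `I = [k/2ⁿ, (k+1)/2ⁿ]` and a point `t ∈ I`,
`δ₁(γψ(k/2ⁿ), γψ(t), γψ((k+1)/2ⁿ))` is at most the sum of `δ_d(γψ(I'))` over all dyadic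
subintervals `I' ⊆ I` containing `t`, where `δ_d` uses the two endpoints and midpoint. -/
theorem delta_one_le_sum_delta_d {M : Type*} [MetricSpace M] (γ : ℝ → M)
    (hper : ∀ x, γ (x + 1) = γ x) (hcont : Continuous γ)
    (v r : ℝ) (hv : v ∈ Set.Icc (0 : ℝ) 1) (hr : r ∈ Set.Icc (0 : ℝ) 1)
    (n k : ℕ) (hk : k < 2 ^ n) (t : ℝ)
    (ht : t ∈ Set.Icc ((k : ℝ) / 2 ^ n) (((k : ℝ) + 1) / 2 ^ n)) :
    ENNReal.ofReal
        (dist (γ (v + r * ((k : ℝ) / 2 ^ n))) (γ (v + r * t)) +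
          dist (γ (v + r * t)) (γ (v + r * (((k : ℝ) + 1) / 2 ^ n))) -
          dist (γ (v + r * ((k : ℝ) / 2 ^ n))) (γ (v + r * (((k : ℝ) + 1) / 2 ^ n)))) ≤
      ∑' p : {p : ℕ × ℕ //
          n ≤ p.1 ∧
          Set.Icc ((p.2 : ℝ) / 2 ^ p.1) (((p.2 : ℝ) + 1) / 2 ^ p.1) ⊆
            Set.Icc ((k : ℝ) / 2 ^ n) (((k : ℝ) + 1) / 2 ^ n) ∧
          t ∈ Set.Icc ((p.2 : ℝ) / 2 ^ p.1) (((p.2 : ℝ) + 1) / 2 ^ p.1)},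
        ENNReal.ofReal
          (dist (γ (v + r * ((p.1.2 : ℝ) / 2 ^ p.1.1)))
              (γ (v + r * (((p.1.2 : ℝ) + 1 / 2) / 2 ^ p.1.1))) +
            dist (γ (v + r * (((p.1.2 : ℝ) + 1 / 2) / 2 ^ p.1.1)))
              (γ (v + r * (((p.1.2 : ℝ) + 1) / 2 ^ p.1.1))) -
            dist (γ (v + r * ((p.1.2 : ℝ) / 2 ^ p.1.1)))
              (γ (v + r * (((p.1.2 : ℝ) + 1) / 2 ^ p.1.1)))) :=
  delta_one_le_sum_delta_d_general γ hcont v r n k t ht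
end

section
/- Chain-of-balls lemma: Let δ ∈ (0, 1/3) and let {B_i}_{i=1}^n be balls in a metric space such that consecutive balls intersect (B_k ∩ B_{k+1} ≠ ∅), every radius is a power δ^k (k an integer), and any two balls of equal radius d are at distance ≥ R·d for a sufficiently large constant R. Let B_{k₀} have the maximal radius. Then every point x in the union ∪B_i satisfies dist(x, center(B_{k₀})) ≤ radius(B_{k₀}) · Σ_{k≥0} 2^k δ^k = radius(B_{k₀})·(1 + 2δ + 4δ² + ...). -/
/-!
Induct on the length of the chain. A ball of maximal radius `ρ` is the only one of that radius:
between two of them the chain consists of balls of radius at most `δ ρ` (radii are powers of `δ`),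
which by induction span a set of diameter at most `2 δ ρ / (1 - 2δ) < R ρ`, contradicting the
separation. For the same reason the part of the chain on either side of the maximal ball lies within
`2 δ ρ / (1 - 2δ)` of a point of that ball, hence within `ρ + 2 δ ρ / (1 - 2δ) = ρ / (1 - 2δ)` of
its center.
-/

open Metric Set

theorem zpow_le_mul_of_zpow_lt {δ : ℝ} (h0 : 0 < δ) (h1 : δ < 1) {k l : ℤ}
    (h : δ ^ k < δ ^ l) : δ ^ k ≤ δ * δ ^ l := by
  have hlk : l + 1 ≤ k := (zpow_lt_zpow_iff_right_of_lt_one₀ h0 h1).mp h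
  calc δ ^ k ≤ δ ^ (l + 1) := (zpow_le_zpow_iff_right_of_lt_one₀ h0 h1).mpr hlk
    _ = δ * δ ^ l := by rw [zpow_add_one₀ h0.ne', mul_comm]

variable {M : Type*} [PseudoMetricSpace M] {δ R : ℝ} {c : ℕ → M} {ρ : ℕ → ℝ} {a b : ℕ}

/-- The chain is indexed by an interval `[a, b]` of `ℕ`, so that its sub-chains have the same form. -/
structure IsBallChain (δ R : ℝ) (c : ℕ → M) (ρ : ℕ → ℝ) (a b : ℕ) : Prop where
  exists_zpow : ∀ i ∈ Icc a b, ∃ k : ℤ, ρ i = δ ^ k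
  inter_nonempty : ∀ i ∈ Ico a b,
    (closedBall (c i) (ρ i) ∩ closedBall (c (i + 1)) (ρ (i + 1))).Nonempty
  le_dist : ∀ i ∈ Icc a b, ∀ j ∈ Icc a b, i ≠ j → ρ i = ρ j →
    ∀ p ∈ closedBall (c i) (ρ i), ∀ q ∈ closedBall (c j) (ρ j), R * ρ i ≤ dist p q

def CoveredByMaxBall (δ : ℝ) (c : ℕ → M) (ρ : ℕ → ℝ) (a b : ℕ) : Prop :=
  ∀ k ∈ Icc a b, (∀ i ∈ Icc a b, ρ i ≤ ρ k) →
    ∀ i ∈ Icc a b, closedBall (c i) (ρ i) ⊆ closedBall (c k) (ρ k / (1 - 2 * δ))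

namespace IsBallChain

theorem mono {a' b' : ℕ} (h : IsBallChain δ R c ρ a b) (ha : a ≤ a') (hb : b' ≤ b) :
    IsBallChain δ R c ρ a' b' where
  exists_zpow i hi := h.exists_zpow i (Icc_subset_Icc ha hb hi)
  inter_nonempty i hi := h.inter_nonempty i (Ico_subset_Ico ha hb hi)
  le_dist i hi j hj := h.le_dist i (Icc_subset_Icc ha hb hi) j (Icc_subset_Icc ha hb hj)

theorem radius_pos (h : IsBallChain δ R c ρ a b) (hδ : 0 < δ) {i : ℕ} (hi : i ∈ Icc a b) :
    0 < ρ i := by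
  obtain ⟨k, hk⟩ := h.exists_zpow i hi
  exact hk ▸ zpow_pos hδ k

theorem radius_le_mul_of_lt (h : IsBallChain δ R c ρ a b) (hδ0 : 0 < δ) (hδ1 : δ < 1)
    {i j : ℕ} (hi : i ∈ Icc a b) (hj : j ∈ Icc a b) (hlt : ρ i < ρ j) : ρ i ≤ δ * ρ j := by
  obtain ⟨k, hk⟩ := h.exists_zpow i hi
  obtain ⟨l, hl⟩ := h.exists_zpow j hj
  rw [hk, hl] at hlt ⊢
  exact zpow_le_mul_of_zpow_lt hδ0 hδ1 hlt

end IsBallChain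

namespace CoveredByMaxBall

theorem dist_le (hcov : CoveredByMaxBall δ c ρ a b) (hδ : 2 * δ < 1) {r : ℝ}
    (hr : ∀ s ∈ Icc a b, ρ s ≤ r) {i j : ℕ} (hi : i ∈ Icc a b) (hj : j ∈ Icc a b)
    {p q : M} (hp : p ∈ closedBall (c i) (ρ i)) (hq : q ∈ closedBall (c j) (ρ j)) :
    dist p q ≤ 2 * r / (1 - 2 * δ) := by
  obtain ⟨m, hm, hmax⟩ := exists_max_image (Icc a b) ρ (finite_Icc a b) ⟨i, hi⟩
  have hp' : dist p (c m) ≤ ρ m / (1 - 2 * δ) := hcov m hm hmax i hi hp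
  have hq' : dist q (c m) ≤ ρ m / (1 - 2 * δ) := hcov m hm hmax j hj hq
  have hmr : ρ m / (1 - 2 * δ) ≤ r / (1 - 2 * δ) :=
    div_le_div_of_nonneg_right (hr m hm) (by linarith)
  calc dist p q ≤ dist p (c m) + dist q (c m) := dist_triangle_right _ _ _
    _ ≤ 2 * r / (1 - 2 * δ) := by rw [mul_div_assoc]; linarith

theorem subset_closedBall_of_mem (hcov : CoveredByMaxBall δ c ρ a b) (hδ : 2 * δ < 1)
    {r : ℝ} (hr : ∀ s ∈ Icc a b, ρ s ≤ δ * r) {z p : M} (hpz : dist p z ≤ r) {j : ℕ}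
    (hj : j ∈ Icc a b) (hp : p ∈ closedBall (c j) (ρ j)) {i : ℕ} (hi : i ∈ Icc a b) :
    closedBall (c i) (ρ i) ⊆ closedBall z (r / (1 - 2 * δ)) := by
  intro x hx
  have hxp := hcov.dist_le hδ hr hi hj hx hp
  have hsum : r + 2 * (δ * r) / (1 - 2 * δ) = r / (1 - 2 * δ) := by
    have : 1 - 2 * δ ≠ 0 := by linarith
    field_simp
    ring
  calc dist x z ≤ dist x p + dist p z := dist_triangle _ _ _
    _ ≤ r / (1 - 2 * δ) := by linarith

end CoveredByMaxBall

namespace IsBallChain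

theorem eq_of_radius_eq_max (h : IsBallChain δ R c ρ a b) (hδ0 : 0 < δ) (hδ : 2 * δ < 1)
    (hR : 2 * δ < R * (1 - 2 * δ))
    (hsub : ∀ a' b', a ≤ a' → b' ≤ b → b' - a' < b - a → CoveredByMaxBall δ c ρ a' b')
    {j : ℕ} (hj : j ∈ Icc a b) (hmax : ∀ i ∈ Icc a b, ρ i ≤ ρ j) {t : ℕ} (ht : t ∈ Icc a b)
    (hjt : j ≤ t) (heq : ρ t = ρ j) : t = j := by
  induction t using Nat.strong_induction_on with
  | _ t ih =>
  by_contra hne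
  have ⟨hja, hjb⟩ := hj
  have ⟨hta, htb⟩ := ht
  have hρ := h.radius_pos hδ0 hj
  obtain ⟨p, hpj, hp⟩ := h.inter_nonempty j ⟨hja, by omega⟩
  rcases (by omega : t = j + 1 ∨ j + 2 ≤ t) with rfl | hjt2
  · have hsep := h.le_dist j hj (j + 1) ht (by omega) heq.symm p hpj p hp
    rw [dist_self] at hsep
    nlinarith
  obtain ⟨q, hq, hqt⟩ := h.inter_nonempty (t - 1) ⟨by omega, by omega⟩
  rw [Nat.sub_add_cancel (by omega)] at hqt
  have hsmall : ∀ s ∈ Icc (j + 1) (t - 1), ρ s ≤ δ * ρ j := by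
    rintro s ⟨hjs, hst⟩
    have hs : s ∈ Icc a b := ⟨by omega, by omega⟩
    refine h.radius_le_mul_of_lt hδ0 (by linarith) hs hj ((hmax s hs).lt_of_ne fun hsj => ?_)
    exact absurd (ih s (by omega) hs (by omega) hsj) (by omega)
  have hpq := (hsub (j + 1) (t - 1) (by omega) (by omega) (by omega)).dist_le hδ hsmall
    ⟨le_rfl, by omega⟩ ⟨by omega, le_rfl⟩ hp hq
  have hsep := h.le_dist j hj t ht (Ne.symm hne) heq.symm p hpj q hqt
  rw [le_div_iff₀ (by linarith)] at hpq
  nlinarith [mul_le_mul_of_nonneg_right hsep (by linarith : (0 : ℝ) ≤ 1 - 2 * δ)]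

theorem radius_lt_of_ne (h : IsBallChain δ R c ρ a b) (hδ0 : 0 < δ) (hδ : 2 * δ < 1)
    (hR : 2 * δ < R * (1 - 2 * δ))
    (hsub : ∀ a' b', a ≤ a' → b' ≤ b → b' - a' < b - a → CoveredByMaxBall δ c ρ a' b')
    {k : ℕ} (hk : k ∈ Icc a b) (hmax : ∀ i ∈ Icc a b, ρ i ≤ ρ k) {i : ℕ} (hi : i ∈ Icc a b)
    (hik : i ≠ k) : ρ i < ρ k := by
  refine (hmax i hi).lt_of_ne fun heq => hik ?_
  rcases le_total k i with hki | hik'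
  · exact h.eq_of_radius_eq_max hδ0 hδ hR hsub hk hmax hi hki heq
  · exact (h.eq_of_radius_eq_max hδ0 hδ hR hsub hi (heq ▸ hmax) hk hik' heq.symm).symm

theorem coveredByMaxBall_of_sub (h : IsBallChain δ R c ρ a b) (hδ0 : 0 < δ) (hδ : 2 * δ < 1)
    (hR : 2 * δ < R * (1 - 2 * δ))
    (hsub : ∀ a' b', a ≤ a' → b' ≤ b → b' - a' < b - a → CoveredByMaxBall δ c ρ a' b') :
    CoveredByMaxBall δ c ρ a b := by
  intro k hk hmax i hi
  have ⟨hka, hkb⟩ := hk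
  have ⟨hia, hib⟩ := hi
  have hsmall : ∀ s ∈ Icc a b, s ≠ k → ρ s ≤ δ * ρ k := fun s hs hsk =>
    h.radius_le_mul_of_lt hδ0 (by linarith) hs hk (h.radius_lt_of_ne hδ0 hδ hR hsub hk hmax hs hsk)
  rcases lt_trichotomy i k with hik | rfl | hki
  · obtain ⟨p, hp, hpk⟩ := h.inter_nonempty (k - 1) ⟨by omega, by omega⟩
    rw [Nat.sub_add_cancel (by omega)] at hpk
    refine (hsub i (k - 1) hia (by omega) (by omega)).subset_closedBall_of_mem hδ
      (fun s ⟨his, hsk⟩ => hsmall s ⟨by omega, by omega⟩ (by omega)) hpk ⟨by omega, le_rfl⟩ hp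
      ⟨le_rfl, by omega⟩
  · exact closedBall_subset_closedBall <|
      le_div_self (h.radius_pos hδ0 hi).le (by linarith) (by linarith)
  · obtain ⟨p, hpk, hp⟩ := h.inter_nonempty k ⟨hka, by omega⟩
    refine (hsub (k + 1) i (by omega) hib (by omega)).subset_closedBall_of_mem hδ
      (fun s ⟨hks, hsi⟩ => hsmall s ⟨by omega, by omega⟩ (by omega)) hpk ⟨le_rfl, by omega⟩ hp
      ⟨by omega, le_rfl⟩

theorem coveredByMaxBall (h : IsBallChain δ R c ρ a b) (hδ0 : 0 < δ) (hδ : 2 * δ < 1)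
    (hR : 2 * δ < R * (1 - 2 * δ)) : CoveredByMaxBall δ c ρ a b := by
  induction hn : b - a using Nat.strong_induction_on generalizing a b with
  | _ n ih =>
  exact h.coveredByMaxBall_of_sub hδ0 hδ hR fun a' b' ha hb hlt =>
    ih _ (hn ▸ hlt) (h.mono ha hb) rfl

theorem of_fin {n : ℕ} (hn : 0 < n) {c' : Fin n → M} {ρ' : Fin n → ℝ}
    (hc : ∀ i : Fin n, c i = c' i) (hρ : ∀ i : Fin n, ρ i = ρ' i)
    (hpow : ∀ i, ∃ k : ℤ, ρ' i = δ ^ k)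
    (hlink : ∀ (i : ℕ) (h : i + 1 < n),
      (closedBall (c' ⟨i, Nat.lt_of_succ_lt h⟩) (ρ' ⟨i, Nat.lt_of_succ_lt h⟩) ∩
        closedBall (c' ⟨i + 1, h⟩) (ρ' ⟨i + 1, h⟩)).Nonempty)
    (hsep : ∀ i j, i ≠ j → ρ' i = ρ' j →
      ∀ p ∈ closedBall (c' i) (ρ' i), ∀ q ∈ closedBall (c' j) (ρ' j), R * ρ' i ≤ dist p q) :
    IsBallChain δ R c ρ 0 (n - 1) where
  exists_zpow i := fun ⟨_, hi⟩ => hρ ⟨i, by omega⟩ ▸ hpow _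
  inter_nonempty i := fun ⟨_, hi⟩ => by
    have hi' : i + 1 < n := by omega
    rw [hc ⟨i, by omega⟩, hρ ⟨i, by omega⟩, hc ⟨i + 1, hi'⟩, hρ ⟨i + 1, hi'⟩]
    exact hlink i hi'
  le_dist i := fun ⟨_, hi⟩ j ⟨_, hj⟩ hij heq => by
    have := hsep ⟨i, by omega⟩ ⟨j, by omega⟩ (by simpa using hij)
    simp only [← hc, ← hρ] at this
    exact this heq

end IsBallChain

/-- Chain-of-balls lemma: given `0 < δ < 1/3` there is `R₀` such that for any separation
constant `R ≥ R₀`, any chain of balls with radii integer powers of `δ`, consecutive balls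
intersecting, and equal-radius balls `R·d`-separated, lies within distance
`radius(B_{k₀})·(1 + 2δ + 4δ² + ⋯) = radius(B_{k₀})/(1-2δ)` of the center of a
maximal-radius ball `B_{k₀}`. -/
theorem chain_of_balls (δ : ℝ) (hδ0 : 0 < δ) (hδ : δ < 1 / 3) :
    ∃ R₀ : ℝ, ∀ (M : Type) [MetricSpace M], ∀ R : ℝ, R₀ ≤ R →
      ∀ (n : ℕ) (c : Fin n → M) (ρ : Fin n → ℝ),
        (∀ i, ∃ k : ℤ, ρ i = δ ^ k) →
        (∀ (i : ℕ) (h : i + 1 < n),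
          (closedBall (c ⟨i, Nat.lt_of_succ_lt h⟩) (ρ ⟨i, Nat.lt_of_succ_lt h⟩) ∩
            closedBall (c ⟨i + 1, h⟩) (ρ ⟨i + 1, h⟩)).Nonempty) →
        (∀ i j, i ≠ j → ρ i = ρ j →
          ∀ p ∈ closedBall (c i) (ρ i), ∀ q ∈ closedBall (c j) (ρ j),
            R * ρ i ≤ dist p q) →
        ∀ k₀ : Fin n, (∀ i, ρ i ≤ ρ k₀) →
          ∀ i, ∀ x ∈ closedBall (c i) (ρ i),
            dist x (c k₀) ≤ ρ k₀ * (1 / (1 - 2 * δ)) := by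
  refine ⟨1 / (1 - 2 * δ), fun M _ R hR n c ρ hpow hlink hsep k₀ hmax i x hx => ?_⟩
  have hn : 0 < n := k₀.pos
  have hδ' : 2 * δ < 1 := by linarith
  have hR' : 2 * δ < R * (1 - 2 * δ) := by
    rw [div_le_iff₀ (by linarith)] at hR
    linarith
  let cℕ : ℕ → M := fun j => if h : j < n then c ⟨j, h⟩ else c k₀
  let ρℕ : ℕ → ℝ := fun j => if h : j < n then ρ ⟨j, h⟩ else ρ k₀
  have hc : ∀ j : Fin n, cℕ j = c j := fun j => dif_pos j.2
  have hρ : ∀ j : Fin n, ρℕ j = ρ j := fun j => dif_pos j.2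
  have hmem : ∀ j : Fin n, (j : ℕ) ∈ Icc 0 (n - 1) := fun j => ⟨j.val.zero_le, Nat.le_sub_one_of_lt j.2⟩
  have hmaxℕ : ∀ j ∈ Icc 0 (n - 1), ρℕ j ≤ ρℕ k₀ := fun j ⟨_, hj⟩ =>
    (hρ ⟨j, by omega⟩).trans_le ((hmax _).trans (hρ k₀).ge)
  have hcov := (IsBallChain.of_fin hn hc hρ hpow hlink hsep).coveredByMaxBall hδ0 hδ' hR'
  have hxk := hcov k₀ (hmem k₀) hmaxℕ i (hmem i) (by rwa [hc, hρ])
  rwa [hc, hρ, mem_closedBall, ← mul_one_div] at hxk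
end

section
/- Averaging over the torus: Let f : 𝕋³ → [0,∞) be measurable, where 𝕋 = ℝ/ℤ. For each dyadic interval I = [a,b] ⊆ [0,1] of length 2^{-k}, ∫_a^b ∫_x^b ∫_y^b f(x,y,z) dz dy dx summed over all dyadic I of generation k equals (by the change of variables x = v+ra, z = v+rb, y ∈ v+rI) at most 2^{-k}·∫₀¹∫₀¹ ∫_{v+rI'} f(v+ra', y, v+rb')·2^{-k} dy dr dv for a single interval I' = [a',b'] of length 2^{-k}, i.e. the triple integral over nested configurations inside a dyadic interval is controlled by the average over random affine placements ψ^{v,r}(t) = v + rt mod 1 of that interval. -/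
open MeasureTheory ENNReal Set Function

/-!
Substituting `x = v + r a` and `z = v + r (a + c)` turns the average over placements of
`[a, a + c]` into `∫_{x ∈ (0,1]} ∫_{z ∈ [x, x + c]} ∫_{y ∈ [x, z]} f x y z`: the shift
`v ↦ v + r a` costs nothing because `f` is periodic along the diagonal, and `r ↦ z` has
Jacobian `c`. On the other side, swapping the `y` and `z` integrals inside a dyadic piece
`[a_j, a_j + c]` gives an integral over `z ∈ [x, a_j + c] ⊆ [x, x + c]`, and the pieces
tile `(0, 1]`.
-/

theorem Function.Periodic.setLIntegral_Ioc_comp_add_right {g : ℝ → ℝ≥0∞} {T : ℝ}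
    (hg : Periodic g T) (hT : 0 < T) (t s : ℝ) :
    ∫⁻ v in Ioc t (t + T), g (v + s) = ∫⁻ v in Ioc t (t + T), g v := by
  have : Fact (0 < T) := ⟨hT⟩
  calc ∫⁻ v in Ioc t (t + T), g (v + s)
      = ∫⁻ v in Ioc t (t + T), hg.lift ((v : AddCircle T) + s) := by
        simp only [← AddCircle.coe_add, hg.lift_coe]
    _ = ∫⁻ x : AddCircle T, hg.lift (x + s) :=
        AddCircle.lintegral_preimage T t (fun x => hg.lift (x + s))
    _ = ∫⁻ x : AddCircle T, hg.lift x := lintegral_add_right_eq_self _ _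
    _ = ∫⁻ v in Ioc t (t + T), g v := by
        rw [← AddCircle.lintegral_preimage T t]
        simp only [hg.lift_coe]

theorem setLIntegral_Ioc_lintegral_comp_add_of_periodic {F : ℝ → ℝ → ℝ≥0∞}
    (hF : Measurable (uncurry F)) {T : ℝ} (hper : ∀ r, Periodic (F · r) T) (hT : 0 < T)
    (t : ℝ) {σ : ℝ → ℝ} (hσ : Measurable σ) (ν : Measure ℝ) [SFinite ν] :
    ∫⁻ v in Ioc t (t + T), ∫⁻ r, F (v + σ r) r ∂ν = ∫⁻ v in Ioc t (t + T), ∫⁻ r, F v r ∂ν := by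
  rw [lintegral_lintegral_swap (by fun_prop), lintegral_lintegral_swap hF.aemeasurable]
  simp only [(hper _).setLIntegral_Ioc_comp_add_right hT]

theorem setLIntegral_Icc_comp_add_right (g : ℝ → ℝ≥0∞) (s A B : ℝ) :
    ∫⁻ y in Icc A B, g (y + s) = ∫⁻ y in Icc (A + s) (B + s), g y := by
  rw [(measurePreserving_add_right volume s).setLIntegral_comp_emb
    (measurableEmbedding_addRight s), image_add_const_Icc]

theorem setLIntegral_Icc_zero_one_comp_add_mul {c : ℝ} (hc : 0 < c) (x : ℝ) (g : ℝ → ℝ≥0∞) :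
    ∫⁻ r in Icc 0 1, g (x + r * c) * ENNReal.ofReal c = ∫⁻ z in Icc x (x + c), g z := by
  have himage : (fun r => x + r * c) '' Icc 0 1 = Icc x (x + c) := by
    simpa [mul_comm, add_comm] using image_affine_Icc' hc x 0 1
  rw [← himage, lintegral_image_eq_lintegral_abs_deriv_mul measurableSet_Icc
    (f' := fun _ => c) (fun r _ => ((hasDerivAt_mul_const c).const_add x).hasDerivWithinAt)
    (fun r _ s _ h => by simpa [hc.ne'] using h)]
  simp only [abs_of_pos hc, mul_comm]

theorem setLIntegral_triangle_swap {g : ℝ → ℝ → ℝ≥0∞} (hg : Measurable (uncurry g)) (A B : ℝ) :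
    ∫⁻ y in Icc A B, ∫⁻ z in Icc y B, g y z = ∫⁻ z in Icc A B, ∫⁻ y in Icc A z, g y z := by
  let e : ℝ → ℝ → ℝ≥0∞ := fun y z => {p : ℝ × ℝ | p.1 ≤ p.2}.indicator (uncurry g) (y, z)
  have he : Measurable (uncurry e) :=
    hg.indicator (measurableSet_le measurable_fst measurable_snd)
  have hleft : ∀ y ∈ Icc A B, ∫⁻ z in Icc y B, g y z = ∫⁻ z in Icc A B, e y z := by
    intro y hy
    have he_eq : ∀ z, e y z = (Ici y).indicator (g y) z := fun z => by
      by_cases h : y ≤ z <;> simp [e, h]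
    have hset : Ici y ∩ Icc A B = Icc y B := by
      ext z; simp only [mem_inter_iff, mem_Ici, mem_Icc]; grind
    simp only [he_eq, setLIntegral_indicator measurableSet_Ici, hset]
  have hright : ∀ z ∈ Icc A B, ∫⁻ y in Icc A z, g y z = ∫⁻ y in Icc A B, e y z := by
    intro z hz
    have he_eq : ∀ y, e y z = (Iic z).indicator (g · z) y := fun y => by
      by_cases h : y ≤ z <;> simp [e, h]
    have hset : Iic z ∩ Icc A B = Icc A z := by
      ext y; simp only [mem_inter_iff, mem_Iic, mem_Icc]; grind
    simp only [he_eq, setLIntegral_indicator measurableSet_Iic, hset]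
  rw [setLIntegral_congr_fun measurableSet_Icc hleft,
    setLIntegral_congr_fun measurableSet_Icc hright, lintegral_lintegral_swap he.aemeasurable]

theorem Measurable.setLIntegral_Icc {α : Type*} [MeasurableSpace α] {φ ψ : α → ℝ}
    (hφ : Measurable φ) (hψ : Measurable ψ) {F : α → ℝ → ℝ≥0∞} (hF : Measurable (uncurry F)) :
    Measurable fun a => ∫⁻ y in Icc (φ a) (ψ a), F a y := by
  have hset : MeasurableSet {q : α × ℝ | q.2 ∈ Icc (φ q.1) (ψ q.1)} :=
    (measurableSet_le (hφ.comp measurable_fst) measurable_snd).inter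
      (measurableSet_le measurable_snd (hψ.comp measurable_fst))
  simp_rw [← lintegral_indicator measurableSet_Icc]
  exact (hF.indicator hset).lintegral_prod_right'

theorem sum_setLIntegral_Ioc_of_monotone {a : ℕ → ℝ} (ha : Monotone a) (g : ℝ → ℝ≥0∞) (n : ℕ) :
    ∑ j ∈ Finset.range n, ∫⁻ x in Ioc (a j) (a (j + 1)), g x = ∫⁻ x in Ioc (a 0) (a n), g x := by
  induction n with
  | zero => simp
  | succ n ih =>
    rw [Finset.sum_range_succ, ih, ← lintegral_union measurableSet_Ioc
      (Ioc_disjoint_Ioc_of_le le_rfl), Ioc_union_Ioc_eq_Ioc (ha n.zero_le) (ha n.le_succ)]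

theorem sum_setLIntegral_simplex_le {f : ℝ → ℝ → ℝ → ℝ≥0∞}
    (hf : Measurable fun p : ℝ × ℝ × ℝ => f p.1 p.2.1 p.2.2) {a : ℕ → ℝ} (ha : Monotone a)
    {c : ℝ} (hac : ∀ j, a (j + 1) ≤ a j + c) (n : ℕ) :
    ∑ j ∈ Finset.range n, ∫⁻ x in Icc (a j) (a (j + 1)), ∫⁻ y in Icc x (a (j + 1)),
        ∫⁻ z in Icc y (a (j + 1)), f x y z ≤
      ∫⁻ x in Ioc (a 0) (a n), ∫⁻ z in Icc x (x + c), ∫⁻ y in Icc x z, f x y z := by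
  rw [← sum_setLIntegral_Ioc_of_monotone ha]
  refine Finset.sum_le_sum fun j _ => ?_
  rw [← Measure.restrict_congr_set Ioc_ae_eq_Icc]
  refine setLIntegral_mono' measurableSet_Ioc fun x hx => ?_
  rw [setLIntegral_triangle_swap (g := f x) (by fun_prop)]
  exact lintegral_mono_set (Icc_subset_Icc_right ((hac j).trans (by linarith [hx.1])))

theorem setLIntegral_affine_placements_eq {f : ℝ → ℝ → ℝ → ℝ≥0∞}
    (hf : Measurable fun p : ℝ × ℝ × ℝ => f p.1 p.2.1 p.2.2)
    (hper : ∀ x y z, f (x + 1) (y + 1) (z + 1) = f x y z) {c : ℝ} (hc : 0 < c) (a : ℝ) :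
    ∫⁻ v in Icc 0 1, ∫⁻ r in Icc 0 1,
        (∫⁻ y in Icc (v + r * a) (v + r * (a + c)), f (v + r * a) y (v + r * (a + c))) *
          ENNReal.ofReal c =
      ∫⁻ x in Ioc 0 1, ∫⁻ z in Icc x (x + c), ∫⁻ y in Icc x z, f x y z := by
  let G : ℝ → ℝ → ℝ≥0∞ := fun x z => ∫⁻ y in Icc x z, f x y z
  have hG : Measurable (uncurry G) :=
    Measurable.setLIntegral_Icc measurable_fst measurable_snd (by fun_prop)
  let F : ℝ → ℝ → ℝ≥0∞ := fun x r => G x (x + r * c) * ENNReal.ofReal c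
  have hF : Measurable (uncurry F) := by fun_prop
  have hF_per : ∀ r, Periodic (F · r) 1 := fun r x => by
    simp only [F, G, show x + 1 + r * c = x + r * c + 1 by ring,
      ← setLIntegral_Icc_comp_add_right, hper]
  calc _ = ∫⁻ v in Ioc 0 1, ∫⁻ r in Icc 0 1, F (v + r * a) r := by
        rw [← Measure.restrict_congr_set Ioc_ae_eq_Icc]
        simp only [F, G, mul_add, add_assoc]
    _ = ∫⁻ v in Ioc 0 1, ∫⁻ r in Icc 0 1, F v r := by
        simpa using setLIntegral_Ioc_lintegral_comp_add_of_periodic hF hF_per one_pos 0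
          (measurable_id.mul_const a) (volume.restrict (Icc 0 1))
    _ = _ := lintegral_congr fun v => setLIntegral_Icc_zero_one_comp_add_mul hc v (G v)

theorem torus_averaging_general (f : ℝ → ℝ → ℝ → ℝ≥0∞)
    (hf : Measurable fun p : ℝ × ℝ × ℝ => f p.1 p.2.1 p.2.2)
    (hper1 : ∀ x y z, f (x + 1) y z = f x y z)
    (hper2 : ∀ x y z, f x (y + 1) z = f x y z)
    (hper3 : ∀ x y z, f x y (z + 1) = f x y z)
    (k : ℕ) (j' : ℕ) :
    ∑ j ∈ Finset.range (2 ^ k),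
        ∫⁻ x in Set.Icc ((j : ℝ) / 2 ^ k) (((j : ℝ) + 1) / 2 ^ k),
          ∫⁻ y in Set.Icc x (((j : ℝ) + 1) / 2 ^ k),
            ∫⁻ z in Set.Icc y (((j : ℝ) + 1) / 2 ^ k), f x y z ≤
      ∫⁻ v in Set.Icc (0 : ℝ) 1, ∫⁻ r in Set.Icc (0 : ℝ) 1,
        (∫⁻ y in Set.Icc (v + r * ((j' : ℝ) / 2 ^ k)) (v + r * (((j' : ℝ) + 1) / 2 ^ k)),
            f (v + r * ((j' : ℝ) / 2 ^ k)) y (v + r * (((j' : ℝ) + 1) / 2 ^ k))) *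
          ENNReal.ofReal ((2 : ℝ) ^ (-(k : ℤ))) := by
  have hstep : ∀ t : ℝ, (t + 1) / 2 ^ k = t / 2 ^ k + (2 : ℝ) ^ (-(k : ℤ)) := fun t => by
    rw [zpow_neg, zpow_natCast, add_div, one_div]
  have hmono : Monotone fun j : ℕ => (j : ℝ) / 2 ^ k := fun i j hij =>
    div_le_div_of_nonneg_right (Nat.cast_le.mpr hij) (by positivity)
  have hsum := sum_setLIntegral_simplex_le hf hmono (c := (2 : ℝ) ^ (-(k : ℤ)))
    (fun j => by push_cast; rw [hstep]) (2 ^ k)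
  push_cast at hsum
  rw [div_self (by positivity), zero_div] at hsum
  rw [hstep, setLIntegral_affine_placements_eq hf (fun x y z => by rw [hper1, hper2, hper3])
    (by positivity)]
  exact hsum

/-- Averaging over the torus: the sum over all dyadic intervals `I` of generation `k` of
the ordered triple integral of a nonnegative (measurable, `1`-periodic in each variable)
function `f` over `{a(I) ≤ x ≤ y ≤ z ≤ b(I)}` is at most the average over random affine
placements `ψ^{v,r}(t) = v + r·t` of a single fixed dyadic interval `I' = [a', b']` of
generation `k` of `∫_{ψ(I')} f(ψ(a'), y, ψ(b')) dy · 2⁻ᵏ`. -/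
theorem torus_averaging (f : ℝ → ℝ → ℝ → ℝ≥0∞)
    (hf : Measurable fun p : ℝ × ℝ × ℝ => f p.1 p.2.1 p.2.2)
    (hper1 : ∀ x y z, f (x + 1) y z = f x y z)
    (hper2 : ∀ x y z, f x (y + 1) z = f x y z)
    (hper3 : ∀ x y z, f x y (z + 1) = f x y z)
    (k : ℕ) (j' : ℕ) (hj' : j' < 2 ^ k) :
    ∑ j ∈ Finset.range (2 ^ k),
        ∫⁻ x in Set.Icc ((j : ℝ) / 2 ^ k) (((j : ℝ) + 1) / 2 ^ k),
          ∫⁻ y in Set.Icc x (((j : ℝ) + 1) / 2 ^ k),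
            ∫⁻ z in Set.Icc y (((j : ℝ) + 1) / 2 ^ k), f x y z ≤
      ∫⁻ v in Set.Icc (0 : ℝ) 1, ∫⁻ r in Set.Icc (0 : ℝ) 1,
        (∫⁻ y in Set.Icc (v + r * ((j' : ℝ) / 2 ^ k)) (v + r * (((j' : ℝ) + 1) / 2 ^ k)),
            f (v + r * ((j' : ℝ) / 2 ^ k)) y (v + r * (((j' : ℝ) + 1) / 2 ^ k))) *
          ENNReal.ofReal ((2 : ℝ) ^ (-(k : ℤ))) :=
  torus_averaging_general f hf hper1 hper2 hper3 k j'
end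

section
/- Decomposition bound for non-flat arcs: Let Γ be 1-Ahlfors-regular, K ⊆ Γ, and 𝒢^K a multiresolution family. For each ball B in the subfamily 𝒢₁ (balls possessing a non-almost-flat arc τ_B ∈ Λ²(B) with β̃(τ_B) > ε₂β₂(B)), the assignment B ↦ I(B) of a dyadic interval (in 𝒟⁰ ∪ 𝒟¹, via the one-third trick) containing the parameter interval of τ_B with diam(I) ≤ 6·ℓ(τ_B) is at most K₁-to-1, where K₁ depends only on the Ahlfors regularity constant and the constant A in the definition of 𝒢^K. -/
open MeasureTheory Metric ENNReal

/-!
All balls `B = (n, x)` assigned the same dyadic interval `I` of length `2⁻ᵏ` carry arcs of length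
`≍ A 2⁻ⁿ` inside `I`, so `2⁻ⁿ ≍ 2⁻ᵏ`: only boundedly many scales `n` occur. At each such scale
the centers `x` are `2⁻ⁿ`-separated points of `Γ` lying within `O(2⁻ⁿ)` of the left endpoint of
`γ(I)`; the disjoint balls of radius `2⁻ⁿ⁻¹` around them each carry mass `≳ 2⁻ⁿ` and together
fit into one ball of mass `≲ 2⁻ⁿ`, so Ahlfors regularity bounds their number.
-/

lemma Set.encard_le_of_forall_finset_card_le {α : Type*} {s : Set α} {k : ℕ}
    (h : ∀ F : Finset α, ↑F ⊆ s → F.card ≤ k) : s.encard ≤ k := by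
  by_contra! hk
  obtain ⟨t, hts, htk⟩ := Set.exists_subset_encard_eq (Order.add_one_le_of_lt hk)
  obtain ⟨F, rfl⟩ :=
    (Set.finite_of_encard_eq_coe (k := k + 1) (by simpa using htk)).exists_finset_coe
  have := h F hts
  rw [Set.encard_coe_eq_coe_finsetCard] at htk
  norm_cast at htk
  omega

lemma Set.encard_le_card_mul_of_forall_fst_mem {ι α : Type*} {s : Set (ι × α)} (t : Finset ι)
    {N : ℕ∞} (hs : ∀ p ∈ s, p.1 ∈ t) (hN : ∀ i ∈ t, {x | (i, x) ∈ s}.encard ≤ N) :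
    s.encard ≤ t.card * N := by
  calc s.encard ≤ (⋃ i ∈ t, Prod.mk i '' {x | (i, x) ∈ s}).encard :=
        Set.encard_le_encard fun p hp ↦ Set.mem_biUnion (hs p hp) ⟨p.2, hp, rfl⟩
    _ ≤ ∑ i ∈ t, (Prod.mk i '' {x | (i, x) ∈ s}).encard := t.set_encard_biUnion_le _
    _ ≤ ∑ _i ∈ t, N := Finset.sum_le_sum fun i hi ↦ by
        rw [(Prod.mk_right_injective i).encard_image]
        exact hN i hi
    _ = t.card * N := by rw [Finset.sum_const, nsmul_eq_mul]

theorem Finset.card_mul_le_measure_closedBall_of_separated {M : Type*} [PseudoMetricSpace M]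
    [MeasurableSpace M] [OpensMeasurableSpace M] (μ : Measure M) (F : Finset M) {z : M}
    {r R : ℝ} {m : ℝ≥0∞} (hFz : ↑F ⊆ closedBall z R)
    (hsep : (F : Set M).Pairwise fun x y ↦ r < dist x y)
    (hm : ∀ x ∈ F, m ≤ μ (closedBall x (r / 2))) :
    F.card * m ≤ μ (closedBall z (R + r / 2)) := by
  have hdisj : (F : Set M).PairwiseDisjoint (closedBall · (r / 2)) := by
    intro x hx y hy hxy
    refine Set.disjoint_left.mpr fun w hwx hwy ↦ (hsep hx hy hxy).not_ge ?_
    linarith [dist_triangle_left x y w, mem_closedBall.mp hwx, mem_closedBall.mp hwy]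
  calc F.card * m = ∑ _x ∈ F, m := by rw [Finset.sum_const, nsmul_eq_mul]
    _ ≤ ∑ x ∈ F, μ (closedBall x (r / 2)) := Finset.sum_le_sum hm
    _ = μ (⋃ x ∈ F, closedBall x (r / 2)) :=
      (measure_biUnion_finset hdisj fun _ _ ↦ measurableSet_closedBall).symm
    _ ≤ μ (closedBall z (R + r / 2)) := by
      refine measure_mono (Set.iUnion₂_subset fun x hx ↦ closedBall_subset_closedBall' ?_)
      linarith [mem_closedBall.mp (hFz hx)]

theorem encard_le_of_separated_of_ahlforsRegular {M : Type*} [PseudoMetricSpace M]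
    [MeasurableSpace M] [OpensMeasurableSpace M] (μ : Measure M) {Γ : Set M}
    (hΓ : Bornology.IsBounded Γ) {C : ℝ} (hC : 0 < C)
    (hup : ∀ (z : M) (r : ℝ), 0 < r → μ (closedBall z r) ≤ ENNReal.ofReal (C * r))
    (hlow : ∀ z ∈ Γ, ∀ r : ℝ, 0 < r → r < diam Γ → ENNReal.ofReal (r / C) ≤ μ (closedBall z r))
    {T : Set M} (hTΓ : T ⊆ Γ) {z : M} {r κ : ℝ} (hr : 0 < r) (hκ : 0 ≤ κ)
    (hTz : T ⊆ closedBall z (κ * r)) (hsep : T.Pairwise fun x y ↦ r < dist x y) :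
    T.encard ≤ max ⌈C ^ 2 * (2 * κ + 1)⌉₊ 1 := by
  by_cases hd : diam Γ ≤ r / 2
  · refine le_trans ?_ (Nat.cast_le.mpr (le_max_right _ _))
    refine Set.encard_le_one_iff.mpr fun x y hx hy ↦ by_contra fun hxy ↦ ?_
    linarith [hsep hx hy hxy, dist_le_diam_of_mem hΓ (hTΓ hx) (hTΓ hy)]
  refine le_trans (Set.encard_le_of_forall_finset_card_le fun F hF ↦ ?_)
    (Nat.cast_le.mpr (le_max_left _ _))
  have h := (F.card_mul_le_measure_closedBall_of_separated μ (hF.trans hTz) (hsep.mono hF)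
    fun x hx ↦ hlow x (hTΓ (hF hx)) _ (by positivity) (not_le.mp hd)).trans
      (hup z _ (by positivity))
  rw [← ENNReal.ofReal_natCast, ← ENNReal.ofReal_mul (by positivity),
    ENNReal.ofReal_le_ofReal_iff (by positivity)] at h
  have hcard : (F.card : ℝ) ≤ C ^ 2 * (2 * κ + 1) := by
    rw [mul_div_assoc', div_le_iff₀ hC] at h
    nlinarith
  exact_mod_cast hcard.trans (Nat.le_ceil _)

lemma Measure.map_restrict_apply_closedBall {α M : Type*} [MeasurableSpace α]
    [PseudoMetricSpace M] [MeasurableSpace M] [OpensMeasurableSpace M] (μ : Measure α)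
    (s : Set α) {f : α → M} (hf : Measurable f) (z : M) (r : ℝ) :
    (μ.restrict s).map f (closedBall z r) = μ (f ⁻¹' closedBall z r ∩ s) := by
  rw [Measure.map_apply hf measurableSet_closedBall,
    Measure.restrict_apply (measurableSet_closedBall.preimage hf)]

lemma sub_lt_of_two_zpow_neg_le_mul {m n : ℤ} {K : ℝ} {G : ℕ} (hK : K < 2 ^ G)
    (h : (2 : ℝ) ^ (-n) ≤ K * 2 ^ (-m)) : m - G < n := by
  have hlt : (2 : ℝ) ^ (-n) < 2 ^ ((G : ℤ) + -m) := by
    calc (2 : ℝ) ^ (-n) ≤ K * 2 ^ (-m) := h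
      _ < 2 ^ G * 2 ^ (-m) := by gcongr
      _ = 2 ^ ((G : ℤ) + -m) := by rw [zpow_add₀ two_ne_zero, zpow_natCast]
  have := (zpow_lt_zpow_iff_right₀ (one_lt_two : (1 : ℝ) < 2)).mp hlt
  omega

lemma dist_le_of_arc_meets_closedBall {M : Type*} [PseudoMetricSpace M] {γ : ℝ → M}
    (hγ : LipschitzWith 1 γ) {a b c h ρ : ℝ} {x : M}
    (hsub : Set.Icc a b ⊆ Set.Icc c (c + h))
    (hmeet : (γ '' Set.Icc a b ∩ closedBall x ρ).Nonempty) : dist x (γ c) ≤ ρ + h := by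
  obtain ⟨_, ⟨t, ht, rfl⟩, htx⟩ := hmeet
  have htc := hsub ht
  calc dist x (γ c) ≤ dist (γ t) x + dist (γ t) (γ c) := dist_triangle_left _ _ _
    _ ≤ ρ + dist t c := add_le_add (mem_closedBall.mp htx) (by simpa using hγ.dist_le_mul t c)
    _ ≤ ρ + h := by
      rw [Real.dist_eq, abs_of_nonneg (by linarith [htc.1])]
      linarith [htc.2]

theorem scale_mem_Ioo_and_dist_le_of_arc_subset_dyadic {M : Type*} [PseudoMetricSpace M]
    {γ : ℝ → M} (hγ : LipschitzWith 1 γ) {C A a b c : ℝ} {n m : ℤ} {G : ℕ} {x : M}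
    (hC : 0 < C) (hA : 0 < A) (hG : 6 * C * A + C / A < 2 ^ G) (hab : a ≤ b)
    (hlb : A * 2 ^ (-n) / C ≤ b - a) (hub : b - a ≤ C * (A * 2 ^ (-n)))
    (hmeet : (γ '' Set.Icc a b ∩ closedBall x (A * 2 ^ (-n))).Nonempty)
    (hsub : Set.Icc a b ⊆ Set.Icc c (c + 2 ^ (-m))) (h6 : (2 : ℝ) ^ (-m) ≤ 6 * (b - a)) :
    n ∈ Finset.Ioo (m - G) (m + G) ∧ x ∈ closedBall (γ c) ((A + 6 * C * A) * 2 ^ (-n)) := by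
  have hlen : b - a ≤ 2 ^ (-m) := by
    linarith [(Set.Icc_subset_Icc_iff hab).mp hsub]
  have hm : (2 : ℝ) ^ (-m) ≤ 6 * C * A * 2 ^ (-n) := by nlinarith
  have hn : (2 : ℝ) ^ (-n) ≤ C / A * 2 ^ (-m) := by
    rw [div_le_iff₀ hC] at hlb
    rw [div_mul_eq_mul_div, le_div_iff₀ hA]
    nlinarith [mul_le_mul_of_nonneg_right hlen hC.le]
  refine ⟨Finset.mem_Ioo.mpr ⟨sub_lt_of_two_zpow_neg_le_mul ?_ hn, ?_⟩, ?_⟩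
  · linarith [show 0 < 6 * C * A by positivity]
  · have hG' : 6 * C * A < 2 ^ G := by linarith [show 0 < C / A by positivity]
    linarith [sub_lt_of_two_zpow_neg_le_mul hG' hm]
  · rw [mem_closedBall]
    linarith [dist_le_of_arc_meets_closedBall hγ hsub hmeet]

lemma add_succ_div_two_pow (o : ℝ) (j k : ℕ) :
    o + ((j : ℝ) + 1) / 2 ^ k = o + j / 2 ^ k + 2 ^ (-(k : ℤ)) := by
  rw [zpow_neg, zpow_natCast]
  ring

/-- Decomposition bound for non-flat arcs: for a 1-Ahlfors-regular curve `Γ = γ([0,1])`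
(with regularity constant `C`, witnessed by the arc-length parameterization `γ`), a
multiresolution family of balls `B = Ball(x, A·2⁻ⁿ)` with centers `x ∈ Xₙ` (`2⁻ⁿ`-separated
sets), and an assignment to each ball `B` (represented by the pair `p = (n,x)`) of a
parameter interval `[a p, b p]` of an arc `τ_B` of length comparable to `radius B`, lying
in `4B` and meeting `B`, together with a dyadic interval `I(B) = ι p` (from `𝒟⁰ ∪ 𝒟¹`,
via the one-third trick) containing `[a p, b p]` and of length at most `6·ℓ(τ_B)`, the
assignment `B ↦ I(B)` is at most `K₁`-to-one, where `K₁` depends only on `C` and `A`. -/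
theorem nonflat_arc_assignment_bounded (C A : ℝ) (hC : 0 < C) (hA : 1 < A) :
    ∃ K₁ : ℕ, ∀ (M : Type) [MetricSpace M], ∀ (γ : ℝ → M),
      (∀ x, γ (x + 1) = γ x) →
      LipschitzWith 1 γ →
      (∀ (z : M) (r : ℝ), 0 < r →
        volume (γ ⁻¹' Metric.closedBall z r ∩ Set.Icc (0 : ℝ) 1) ≤
          ENNReal.ofReal (C * r)) →
      (∀ z ∈ γ '' Set.Icc (0 : ℝ) 1, ∀ r : ℝ, 0 < r →
        r < Metric.diam (γ '' Set.Icc (0 : ℝ) 1) →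
        ENNReal.ofReal (r / C) ≤
          volume (γ ⁻¹' Metric.closedBall z r ∩ Set.Icc (0 : ℝ) 1)) →
      ∀ X : ℤ → Set M,
        (∀ n, X n ⊆ γ '' Set.Icc (0 : ℝ) 1) →
        (∀ n : ℤ, ∀ x ∈ X n, ∀ y ∈ X n, x ≠ y → (2 : ℝ) ^ (-n) < dist x y) →
        ∀ S : Set (ℤ × M), (∀ p ∈ S, p.2 ∈ X p.1) →
          ∀ (a b : ℤ × M → ℝ) (ι : ℤ × M → ℕ × ℕ × Bool),
            (∀ p ∈ S, a p < b p) →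
            (∀ p ∈ S, A * (2 : ℝ) ^ (-p.1) / C ≤ b p - a p) →
            (∀ p ∈ S, b p - a p ≤ C * (A * (2 : ℝ) ^ (-p.1))) →
            (∀ p ∈ S, γ '' Set.Icc (a p) (b p) ⊆
              Metric.closedBall p.2 (4 * A * (2 : ℝ) ^ (-p.1))) →
            (∀ p ∈ S, (γ '' Set.Icc (a p) (b p) ∩
              Metric.closedBall p.2 (A * (2 : ℝ) ^ (-p.1))).Nonempty) →
            (∀ p ∈ S, Set.Icc (a p) (b p) ⊆
              Set.Icc
                ((if (ι p).2.2 then (1 : ℝ) / 3 else 0) + ((ι p).2.1 : ℝ) / 2 ^ (ι p).1)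
                ((if (ι p).2.2 then (1 : ℝ) / 3 else 0) +
                  (((ι p).2.1 : ℝ) + 1) / 2 ^ (ι p).1)) →
            (∀ p ∈ S, (2 : ℝ) ^ (-((ι p).1 : ℤ)) ≤ 6 * (b p - a p)) →
            ∀ I : ℕ × ℕ × Bool,
              {p ∈ S | ι p = I}.Finite ∧ {p ∈ S | ι p = I}.ncard ≤ K₁ := by
  obtain ⟨G, hG⟩ := pow_unbounded_of_one_lt (6 * C * A + C / A) (one_lt_two : (1 : ℝ) < 2)
  refine ⟨2 * G * max ⌈C ^ 2 * (2 * (A + 6 * C * A) + 1)⌉₊ 1, ?_⟩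
  intro M _ γ _ hγ hup hlow X hXΓ hXsep S hSX a b ι hab hlb hub _ hmeet hsubI h6 ⟨k, j, s⟩
  borelize M
  set c := (if s then (1 : ℝ) / 3 else 0) + j / 2 ^ k
  set fiber := {p ∈ S | ι p = (k, j, s)}
  have hfiber : ∀ p ∈ fiber, p.1 ∈ Finset.Ioo ((k : ℤ) - G) (k + G) ∧
      p.2 ∈ closedBall (γ c) ((A + 6 * C * A) * 2 ^ (-p.1)) := by
    rintro p ⟨hp, hpI⟩
    have h6p := h6 p hp
    rw [hpI] at h6p
    exact scale_mem_Ioo_and_dist_le_of_arc_subset_dyadic hγ hC (by linarith) hG (hab p hp).le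
      (hlb p hp) (hub p hp) (hmeet p hp)
      (by simpa only [hpI, add_succ_div_two_pow] using hsubI p hp) h6p
  have hμ := Measure.map_restrict_apply_closedBall volume (Set.Icc (0 : ℝ) 1)
    hγ.continuous.measurable
  have hslice (n : ℤ) :
      {x | (n, x) ∈ fiber}.encard ≤ max ⌈C ^ 2 * (2 * (A + 6 * C * A) + 1)⌉₊ 1 :=
    encard_le_of_separated_of_ahlforsRegular ((volume.restrict (Set.Icc 0 1)).map γ)
      (isCompact_Icc.image hγ.continuous).isBounded hC (by simpa only [hμ] using hup)
      (by simpa only [hμ] using hlow) (fun x hx ↦ hXΓ n (hSX _ hx.1)) (by positivity)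
      (by nlinarith) (fun x hx ↦ (hfiber _ hx).2)
      fun x hx y hy ↦ hXsep n x (hSX _ hx.1) y (hSX _ hy.1)
  have hscales : (Finset.Ioo ((k : ℤ) - G) (k + G)).card ≤ 2 * G := by
    rw [Int.card_Ioo]
    omega
  rw [← Set.encard_le_coe_iff_finite_ncard_le]
  calc fiber.encard
      ≤ (Finset.Ioo ((k : ℤ) - G) (k + G)).card * max ⌈C ^ 2 * (2 * (A + 6 * C * A) + 1)⌉₊ 1 :=
        Set.encard_le_card_mul_of_forall_fst_mem _ (fun p hp ↦ (hfiber p hp).1) fun n _ ↦ hslice n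
    _ ≤ _ := by exact_mod_cast Nat.mul_le_mul_right _ hscales
end
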